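/- Let σ ∈ VSubst and let x ↦ t be a binding with x ∈ hvars(σ) and vars(t) ⊆ hvars(σ). Suppose that rt(x, σ) is linear or rt(t, σ) is linear, and that every variable y ∈ vars(rt(x, σ)) ∩ vars(rt(t, σ)) occurs linearly (i.e., exactly once) both in rt(x, σ) and in rt(t, σ). Then for every τ ∈ mgs(σ ∪ {x = t}): hvars(σ) ∖ {y ∈ Vars | vars(rt(y, σ)) ∩ vars(rt(x, σ)) ∩ vars(rt(t, σ)) ≠ ∅} ⊆ hvars(τ). -/

import Mathlib

/-!  Common infrastructure: finite and rational trees, substitutions in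
rational solved form, the theory RT of rational trees, finiteness /
groundness operators, and Boolean functions over a set of variables of
interest. -/

/-- A signature: a type of function symbols with fixed arities. -/
structure Signature where
  Sym : Type
  arity : Sym → ℕ

/-- Finite terms over a signature, with variables drawn from `ℕ`. -/
inductive HTerm (Sg : Signature) : Type where
  | var : ℕ → HTerm Sg
  | app : (f : Sg.Sym) → (Fin (Sg.arity f) → HTerm Sg) → HTerm Sg

namespace HTerm

variable {Sg : Signature}

/-- The set of variables occurring in a finite term. -/
def varsIn : HTerm Sg → Set ℕ
  | .var x => {x}
  | .app _ ts => ⋃ i, (ts i).varsIn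

/-- Homomorphic application of a variable assignment to a finite term. -/
def substRaw (m : ℕ → HTerm Sg) : HTerm Sg → HTerm Sg
  | .var x => m x
  | .app f ts => .app f (fun i => (ts i).substRaw m)

/-- The label of the node of a finite term at a given path
(`none` if there is no node at that path). -/
def labelAt : HTerm Sg → List ℕ → Option (Sg.Sym ⊕ ℕ)
  | .var x, [] => some (Sum.inr x)
  | .app f _, [] => some (Sum.inl f)
  | .var _, _ :: _ => none
  | .app f ts, i :: p => if h : i < Sg.arity f then (ts ⟨i, h⟩).labelAt p else none

end HTerm

/-- Substitutions: maps from variables to finite terms that are the identity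
on all but finitely many variables. -/
structure Subst (Sg : Signature) where
  map : ℕ → HTerm Sg
  finite : {x : ℕ | map x ≠ HTerm.var x}.Finite

namespace Subst

variable {Sg : Signature}

/-- The domain of a substitution. -/
def dom (σ : Subst Sg) : Set ℕ := {x | σ.map x ≠ HTerm.var x}

/-- Application of a substitution to a finite term. -/
def apply (σ : Subst Sg) (t : HTerm Sg) : HTerm Sg := t.substRaw σ.map

/-- `σ.iter i t` is `t σ^i`, the `i`-fold application of `σ` to `t`. -/
def iter (σ : Subst Sg) (i : ℕ) (t : HTerm Sg) : HTerm Sg := σ.apply^[i] t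

/-- The set of variables occurring in the bindings of `σ`. -/
def varsOf (σ : Subst Sg) : Set ℕ := σ.dom ∪ ⋃ x ∈ σ.dom, (σ.map x).varsIn

/-- The number of bindings of `σ`. -/
noncomputable def numBindings (σ : Subst Sg) : ℕ := σ.finite.toFinset.card

/-- The set of bindings of `σ`, as pairs (variable, term). -/
def bindings (σ : Subst Sg) : Set (ℕ × HTerm Sg) :=
  {p | p.1 ∈ σ.dom ∧ p.2 = σ.map p.1}

end Subst

/-- A set of bindings forms a circular substitution
`{x₁ ↦ x₂, …, x_{n-1} ↦ x_n, x_n ↦ x₁}` for some `n > 1` and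
distinct variables `x₁, …, x_n`. -/
def IsCircularBindingSet {Sg : Signature} (S : Set (ℕ × HTerm Sg)) : Prop :=
  ∃ n : ℕ, 1 < n ∧ ∃ x : ℕ → ℕ,
    (∀ i j, i < n → j < n → x i = x j → i = j) ∧
    S = {p | ∃ i < n, p = (x i, HTerm.var (x ((i + 1) % n)))}

/-- `σ` is in rational solved form: no subset of its bindings forms a
circular substitution.  `RSubst` is the set of such substitutions. -/
def Subst.InRSF {Sg : Signature} (σ : Subst Sg) : Prop :=
  ∀ S ⊆ σ.bindings, ¬ IsCircularBindingSet S

/-- Variable-idempotent substitutions: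
`vars(tσσ) = vars(tσ)` for every finite term `t`. -/
def Subst.IsVSubst {Sg : Signature} (σ : Subst Sg) : Prop :=
  σ.InRSF ∧ ∀ t : HTerm Sg, (σ.apply (σ.apply t)).varsIn = (σ.apply t).varsIn

/-- The finiteness functions `hvars_n`. -/
def Subst.hvarsN {Sg : Signature} (σ : Subst Sg) : ℕ → Set ℕ
  | 0 => {y | y ∉ σ.dom}
  | n + 1 => σ.hvarsN n ∪ {y | y ∈ σ.dom ∧ (σ.map y).varsIn ⊆ σ.hvarsN n}

/-- The finiteness operator `hvars` (the increasing chain `hvars_n` is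
stationary, so its union equals its stationary value). -/
def Subst.hvars {Sg : Signature} (σ : Subst Sg) : Set ℕ := ⋃ n, σ.hvarsN n

/-- The occurrence functions `occ_n`. -/
def Subst.occN {Sg : Signature} (σ : Subst Sg) : ℕ → ℕ → Set ℕ
  | 0, v => {v} \ σ.dom
  | n + 1, v => {y | ((σ.map y).varsIn ∩ σ.occN n v).Nonempty}

/-- The occurrence operator `occ`. -/
noncomputable def Subst.occ {Sg : Signature} (σ : Subst Sg) (v : ℕ) : Set ℕ :=
  σ.occN σ.numBindings v

/-- The groundness operator `gvars`. -/
noncomputable def Subst.gvars {Sg : Signature} (σ : Subst Sg) : Set ℕ :=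
  {y | y ∈ σ.dom ∧ ∀ v ∈ σ.varsOf, y ∉ σ.occ v}

/-! Possibly infinite terms, represented by their labeling functions
(partial maps from finite paths to labels; a label is either a function
symbol or a variable). -/

/-- The set of variables occurring in a possibly infinite term. -/
def treeVars {Sg : Signature} (u : List ℕ → Option (Sg.Sym ⊕ ℕ)) : Set ℕ :=
  {x | ∃ p, u p = some (Sum.inr x)}

/-- A possibly infinite term is finite (a member of `HTerms`) iff its set of
nodes is finite. -/
def treeFinite {Sg : Signature} (u : List ℕ → Option (Sg.Sym ⊕ ℕ)) : Prop :=
  {p | (u p).isSome}.Finite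

/-- A possibly infinite term is linear iff each variable labels at most one
of its leaves. -/
def treeLinear {Sg : Signature} (u : List ℕ → Option (Sg.Sym ⊕ ℕ)) : Prop :=
  ∀ (y : ℕ) (p q : List ℕ),
    u p = some (Sum.inr y) → u q = some (Sum.inr y) → p = q

/-- A variable `y` occurs linearly in a possibly infinite term iff it labels
exactly one of its leaves. -/
def occursLinearlyIn {Sg : Signature} (y : ℕ)
    (u : List ℕ → Option (Sg.Sym ⊕ ℕ)) : Prop :=
  ∃! p : List ℕ, u p = some (Sum.inr y)

/-- A possibly infinite term is a variable. -/
def treeIsVar {Sg : Signature} (u : List ℕ → Option (Sg.Sym ⊕ ℕ)) : Prop :=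
  ∃ y : ℕ, u = (HTerm.var y : HTerm Sg).labelAt

/- `σ.rt t` is the limit of the converging sequence `t σ^i` of finite terms:
its label at each path is the eventual (stable) label of the terms `t σ^i`
at that path. -/
open Classical in
noncomputable def Subst.rt {Sg : Signature} (σ : Subst Sg) (t : HTerm Sg) :
    List ℕ → Option (Sg.Sym ⊕ ℕ) := fun p =>
  if h : ∃ v : Option (Sg.Sym ⊕ ℕ), ∃ N : ℕ, ∀ i ≥ N, (σ.iter i t).labelAt p = v
  then h.choose else none

/-! The theory RT of rational trees, semantically. -/

/-- A first-order structure for the signature `Sg`. -/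
structure Struc (Sg : Signature) where
  carrier : Type
  interp : (f : Sg.Sym) → (Fin (Sg.arity f) → carrier) → carrier

/-- Evaluation of a finite term in a structure under a valuation. -/
def HTerm.eval {Sg : Signature} (A : Struc Sg) (v : ℕ → A.carrier) :
    HTerm Sg → A.carrier
  | .var x => v x
  | .app f ts => A.interp f (fun i => (ts i).eval A v)

/-- Sets of equations between finite terms. -/
abbrev EqSet (Sg : Signature) := Set (HTerm Sg × HTerm Sg)

/-- A valuation satisfies a set of equations (read as their conjunction). -/
def Struc.Sat {Sg : Signature} (A : Struc Sg) (v : ℕ → A.carrier)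
    (E : EqSet Sg) : Prop :=
  ∀ e ∈ E, e.1.eval A v = e.2.eval A v

/-- A substitution read as the set of equations `x = σ(x)`, `x ∈ dom σ`. -/
def Subst.eqs {Sg : Signature} (σ : Subst Sg) : EqSet Sg :=
  {e | ∃ x ∈ σ.dom, e = (HTerm.var x, σ.map x)}

/-- The variables occurring in a set of equations. -/
def eqsVars {Sg : Signature} (E : EqSet Sg) : Set ℕ :=
  ⋃ e ∈ E, (e.1.varsIn ∪ e.2.varsIn)

/-- A model of the theory RT of rational trees: a structure satisfying the
identity axioms (injectivity of each function symbol and distinctness of the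
ranges of distinct function symbols) and, for each substitution in rational
solved form, the corresponding uniqueness axiom. -/
structure RTModel (Sg : Signature) where
  struc : Struc Sg
  inj : ∀ (f : Sg.Sym) (a b : Fin (Sg.arity f) → struc.carrier),
    struc.interp f a = struc.interp f b → a = b
  distinct : ∀ (f g : Sg.Sym) (a : Fin (Sg.arity f) → struc.carrier)
    (b : Fin (Sg.arity g) → struc.carrier), f ≠ g → struc.interp f a ≠ struc.interp g b
  uniqueness : ∀ σ : Subst Sg, σ.InRSF → ∀ v : ℕ → struc.carrier,
    ∃! w : ℕ → struc.carrier,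
      (∀ x ∉ σ.dom, w x = v x) ∧ struc.Sat w σ.eqs

/-- `RT ⊢ ∀(E → F)`. -/
def RTImp {Sg : Signature} (E F : EqSet Sg) : Prop :=
  ∀ (A : RTModel Sg) (v : ℕ → A.struc.carrier), A.struc.Sat v E → A.struc.Sat v F

/-- `RT ⊢ ∀(E ↔ F)`. -/
def RTEquiv {Sg : Signature} (E F : EqSet Sg) : Prop :=
  ∀ (A : RTModel Sg) (v : ℕ → A.struc.carrier), A.struc.Sat v E ↔ A.struc.Sat v F

/-- The set of relevant most general solutions of a set of equations in RT. -/
def mgsRT {Sg : Signature} (E : EqSet Sg) : Set (Subst Sg) :=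
  {σ | σ.InRSF ∧ RTEquiv σ.eqs E ∧ σ.varsOf ⊆ eqsVars E}

/-- `↓σ`: the substitutions obtainable as most general solutions of `σ`
together with some further set of equations in rational solved form. -/
def downRT {Sg : Signature} (σ : Subst Sg) : Set (Subst Sg) :=
  {τ | ∃ σ' : Subst Sg, σ'.InRSF ∧ τ ∈ mgsRT (σ.eqs ∪ σ'.eqs)}

/-- Two valuations agree outside a set `W` of variables. -/
def agreesOff {α : Type _} (W : Set ℕ) (v w : ℕ → α) : Prop :=
  ∀ x ∉ W, v x = w x

/-- `RT ⊢ ∀(∃W.E ↔ ∃W.F)`. -/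
def RTExistsEquiv {Sg : Signature} (W : Set ℕ) (E F : EqSet Sg) : Prop :=
  ∀ (A : RTModel Sg) (v : ℕ → A.struc.carrier),
    (∃ w, agreesOff W w v ∧ A.struc.Sat w E) ↔
    (∃ w, agreesOff W w v ∧ A.struc.Sat w F)

/-- `∃∃x.{σ}` relative to the set `VI` of the variables of interest:
the substitutions `σ'` in rational solved form with
`RT ⊢ ∀(∃ (Vars ∖ VI) . (σ' ↔ ∃x.σ))`. -/
def projExists {Sg : Signature} (VI : Set ℕ) (x : ℕ) (σ : Subst Sg) :
    Set (Subst Sg) :=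
  {σ' | σ'.InRSF ∧ ∀ (A : RTModel Sg) (v : ℕ → A.struc.carrier),
    ∃ w, agreesOff VIᶜ w v ∧
      (A.struc.Sat w σ'.eqs ↔ ∃ u, agreesOff {x} u w ∧ A.struc.Sat u σ.eqs)}

/-- `∃∃x.Σ` for a set `Σ` of substitutions. -/
def projExistsSet {Sg : Signature} (VI : Set ℕ) (x : ℕ) (S : Set (Subst Sg)) :
    Set (Subst Sg) := ⋃ σ ∈ S, projExists VI x σ

/-! Boolean valuations and Boolean functions over the variables of
interest (semantically: only the values on `VI` matter). -/

abbrev BVal := ℕ → Prop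
abbrev BFun := BVal → Prop

/-- Entailment `φ ⊨ ψ` of Boolean functions. -/
def BFun.Entails (φ ψ : BFun) : Prop := ∀ a, φ a → ψ a

/-- The Boolean function of a variable. -/
def bVar (x : ℕ) : BFun := fun a => a x

def bAnd (φ ψ : BFun) : BFun := fun a => φ a ∧ ψ a
def bOr (φ ψ : BFun) : BFun := fun a => φ a ∨ ψ a
def bNot (φ : BFun) : BFun := fun a => ¬ φ a
def bIff (φ ψ : BFun) : BFun := fun a => φ a ↔ ψ a

/-- `⋀S`: the conjunction of the variables in `S` (`⊤` if `S = ∅`). -/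
def bConj (S : Set ℕ) : BFun := fun a => ∀ x ∈ S, a x

/-- `∃x.φ = φ[1/x] ∨ φ[0/x]` (Schröder's elimination principle). -/
def bExists (x : ℕ) (φ : BFun) : BFun :=
  fun a => φ (Function.update a x True) ∨ φ (Function.update a x False)

/-- `∃S.φ`: elimination of all the variables of `S`. -/
def bExistsSet (S : Set ℕ) (φ : BFun) : BFun :=
  fun a => ∃ b : BVal, (∀ x ∉ S, b x = a x) ∧ φ b

/-- `true(φ)`: the variables of `VI` necessarily true for `φ`. -/
def trueVars (VI : Set ℕ) (φ : BFun) : Set ℕ := {x ∈ VI | ∀ a, φ a → a x}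

/-- `false(φ)`: the variables of `VI` necessarily false for `φ`. -/
def falseVars (VI : Set ℕ) (φ : BFun) : Set ℕ := {x ∈ VI | ∀ a, φ a → ¬ a x}

/-- `φ ∈ Pos`: `φ` is true under the everything-is-true assignment. -/
def IsPos (φ : BFun) : Prop := φ (fun _ => True)

/-- `pos(φ) = φ ∨ ⋀VI`. -/
def bPos (VI : Set ℕ) (φ : BFun) : BFun := bOr φ (bConj VI)

/-- `hval(σ)`: the valuation assigning true exactly to the variables of
`hvars(σ)`. -/
def Subst.hval {Sg : Signature} (σ : Subst Sg) : BVal := fun x => x ∈ σ.hvars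

/-- `gval(σ)`: the valuation assigning true exactly to the variables of
`gvars(σ)`. -/
noncomputable def Subst.gval {Sg : Signature} (σ : Subst Sg) : BVal :=
  fun x => x ∈ σ.gvars

/-- `γ_H(h)`. -/
def gammaH {Sg : Signature} (h : Set ℕ) : Set (Subst Sg) :=
  {σ | σ.InRSF ∧ h ⊆ σ.hvars}

/-- `γ_FD(φ)`. -/
def gammaFD {Sg : Signature} (φ : BFun) : Set (Subst Sg) :=
  {σ | σ.InRSF ∧ ∀ τ ∈ downRT σ, φ τ.hval}

/-- `γ_GD(ψ)`. -/
noncomputable def gammaGD {Sg : Signature} (ψ : BFun) : Set (Subst Sg) :=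
  {σ | σ.InRSF ∧ ∀ τ ∈ downRT σ, ψ τ.gval}

/-- The substitution consisting of the single binding `x ↦ t`. -/
def singleSubst {Sg : Signature} (x : ℕ) (t : HTerm Sg) : Subst Sg where
  map := fun y => if y = x then t else HTerm.var y
  finite := Set.Finite.subset (Set.finite_singleton x) (fun y hy => by
    by_contra hxy
    rw [Set.mem_singleton_iff] at hxy
    simp only [Set.mem_setOf_eq] at hy
    exact hy (if_neg hxy))

namespace AMGU

open HTerm
open scoped Classical

variable {Sg : Signature}

/-! ### The model of (possibly junky) infinite trees -/

/-- Carrier: arbitrary labeling functions. -/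
abbrev C (Sg : Signature) := List ℕ → Option Sg.Sym

def Cinterp (f : Sg.Sym) (ts : Fin (Sg.arity f) → C Sg) : C Sg :=
  fun p => match p with
  | [] => some f
  | i :: p => if h : i < Sg.arity f then ts ⟨i, h⟩ p else none

def strucC (Sg : Signature) : Struc Sg := ⟨C Sg, Cinterp⟩

lemma Cinterp_nil (f : Sg.Sym) (ts) : Cinterp f ts [] = some f := rfl

lemma Cinterp_cons (f : Sg.Sym) (ts) (i : ℕ) (p : List ℕ) :
    Cinterp f ts (i :: p) = if h : i < Sg.arity f then ts ⟨i, h⟩ p else none := rfl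

lemma Cinterp_inj (f : Sg.Sym) (a b : Fin (Sg.arity f) → C Sg)
    (h : Cinterp f a = Cinterp f b) : a = b := by
  funext i p
  have := congrFun h (i.val :: p)
  rw [Cinterp_cons, Cinterp_cons, dif_pos i.isLt, dif_pos i.isLt] at this
  exact this

lemma Cinterp_distinct (f g : Sg.Sym) (a : Fin (Sg.arity f) → C Sg)
    (b : Fin (Sg.arity g) → C Sg) (hfg : f ≠ g) : Cinterp f a ≠ Cinterp g b := by
  intro h
  have := congrFun h []
  simp [Cinterp_nil] at this
  exact hfg this

/-! ### Variable chains of a substitution in rational solved form -/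

/-- One step along a variable-variable binding chain. -/
noncomputable def vstep (ρ : Subst Sg) (z : ℕ) : ℕ :=
  match ρ.map z with
  | .var z' => z'
  | _ => z

/-- `z` is bound to a variable. -/
def vbad (ρ : Subst Sg) (z : ℕ) : Prop :=
  z ∈ ρ.dom ∧ ∃ z', ρ.map z = .var z'

lemma vstep_of_vbad {ρ : Subst Sg} {z z' : ℕ} (h : ρ.map z = .var z') :
    vstep ρ z = z' := by
  unfold vstep; rw [h]

/-- Variable chains exit (no cycles, by rational solved form). -/
lemma exit_exists {ρ : Subst Sg} (hρ : ρ.InRSF) (z : ℕ) :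
    ∃ k, ¬ vbad ρ ((vstep ρ)^[k] z) := by
  by_contra hall
  push_neg at hall
  -- all iterates are in dom and map to variables
  have hdom : ∀ k, (vstep ρ)^[k] z ∈ ρ.dom := fun k => (hall k).1
  have hstep : ∀ k, ρ.map ((vstep ρ)^[k] z) = .var ((vstep ρ)^[k+1] z) := by
    intro k
    obtain ⟨z', hz'⟩ := (hall k).2
    rw [hz', Function.iterate_succ_apply', vstep_of_vbad hz']
  -- pigeonhole: some repetition among the first numBindings+1 iterates
  set N := ρ.numBindings with hN
  have hcard : (Finset.range (N + 1)).card = N + 1 := Finset.card_range _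
  have hmaps : ∀ k ∈ Finset.range (N + 1), (vstep ρ)^[k] z ∈ ρ.finite.toFinset := by
    intro k _
    simpa [Set.Finite.mem_toFinset, Subst.dom] using hdom k
  have hlt : ρ.finite.toFinset.card < (Finset.range (N+1)).card := by
    rw [hcard]
    exact Nat.lt_succ_of_le (le_of_eq rfl)
  obtain ⟨i, hi, j, hj, hij, heq⟩ :=
    Finset.exists_ne_map_eq_of_card_lt_of_maps_to hlt hmaps
  -- wlog i < j
  wlog hlt2 : i < j generalizing i j
  · exact this j hj i hi hij.symm heq.symm (by omega)
  -- we have a cycle starting at a := iterate i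
  have hcycle : (vstep ρ)^[j - i] ((vstep ρ)^[i] z) = (vstep ρ)^[i] z := by
    rw [← Function.iterate_add_apply]
    rw [show j - i + i = j by omega]
    exact heq.symm
  generalize ha : (vstep ρ)^[i] z = a at hcycle
  have hdoma : ∀ k, (vstep ρ)^[k] a ∈ ρ.dom := by
    intro k; rw [← ha, ← Function.iterate_add_apply]; exact hdom _
  have hstepa : ∀ k, ρ.map ((vstep ρ)^[k] a) = .var ((vstep ρ)^[k+1] a) := by
    intro k; rw [← ha, ← Function.iterate_add_apply, ← Function.iterate_add_apply]
    have h1 := hstep (k + i)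
    rwa [show k + i + 1 = k + 1 + i by omega] at h1
  -- minimal period
  have hex : ∃ m, 0 < m ∧ (vstep ρ)^[m] a = a := ⟨j - i, by omega, hcycle⟩
  classical
  obtain ⟨hm0, hma⟩ := Nat.find_spec hex
  set m := Nat.find hex with hm
  -- m = 1 impossible: would give x ↦ x binding
  have hm1 : m ≠ 1 := by
    intro h1
    have h2 := hstepa 0
    simp only [Function.iterate_zero, id_eq, zero_add] at h2
    rw [show (1:ℕ) = m from h1.symm, hma] at h2
    exact (hdoma 0) (by simp only [Function.iterate_zero, id_eq]; simpa using h2)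
  have hm2 : 1 < m := by omega
  -- injectivity of k ↦ iterate k a on [0, m)
  have hinj : ∀ k l, k < m → l < m → (vstep ρ)^[k] a = (vstep ρ)^[l] a → k = l := by
    intro k l hk hl hkl
    by_contra hne
    wlog hklt : k < l generalizing k l
    · exact this l k hl hk hkl.symm (Ne.symm hne) (by omega)
    have hret : (vstep ρ)^[m - l + k] a = a := by
      have h2 : (vstep ρ)^[m - l] ((vstep ρ)^[k] a) = (vstep ρ)^[m - l] ((vstep ρ)^[l] a) := by
        rw [hkl]
      rw [← Function.iterate_add_apply, ← Function.iterate_add_apply] at h2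
      rw [show m - l + l = m by omega, hma] at h2
      exact h2
    have hmin := Nat.find_min hex (m := m - l + k) (by omega)
    push_neg at hmin
    exact absurd hret (hmin (by omega))
  -- build the circular binding set
  have hcirc : IsCircularBindingSet
      {p : ℕ × HTerm Sg | ∃ i < m, p = ((vstep ρ)^[i] a, HTerm.var ((vstep ρ)^[(i + 1) % m] a))} :=
    ⟨m, hm2, fun k => (vstep ρ)^[k] a, fun i j hi hj hij => hinj i j hi hj hij, rfl⟩
  apply hρ _ _ hcirc
  rintro ⟨y, u⟩ ⟨k, hk, hp⟩
  obtain ⟨h1, h2⟩ := Prod.mk.injEq .. ▸ hp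
  constructor
  · rw [h1]; exact hdoma k
  · rw [h1, h2]
    have h3 := hstepa k
    rcases Nat.lt_or_ge (k+1) m with h | h
    · rw [Nat.mod_eq_of_lt h]
      rw [h3]
    · have hk1 : k + 1 = m := by omega
      rw [hk1, Nat.mod_self, h3, hk1, hma]
      simp

/-- Rank: distance to the end of the variable chain. -/
noncomputable def vrank {ρ : Subst Sg} (hρ : ρ.InRSF) (z : ℕ) : ℕ :=
  Nat.find (exit_exists hρ z)

lemma vrank_step {ρ : Subst Sg} (hρ : ρ.InRSF) {z z' : ℕ}
    (hz : z ∈ ρ.dom) (h : ρ.map z = .var z') : vrank hρ z' < vrank hρ z := by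
  have hbad : vbad ρ z := ⟨hz, z', h⟩
  have h0 : vrank hρ z ≠ 0 := by
    intro h0
    have := Nat.find_spec (exit_exists hρ z)
    rw [show Nat.find (exit_exists hρ z) = 0 from h0] at this
    simp at this
    exact this hbad
  obtain ⟨k, hk⟩ := Nat.exists_eq_succ_of_ne_zero h0
  have hspec := Nat.find_spec (exit_exists hρ z)
  rw [show Nat.find (exit_exists hρ z) = vrank hρ z from rfl, hk] at hspec
  have : ¬ vbad ρ ((vstep ρ)^[k] z') := by
    rw [← vstep_of_vbad h, ← Function.iterate_succ_apply]
    exact hspec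
  have : vrank hρ z' ≤ k := Nat.find_le this
  omega

end AMGU
namespace AMGU

open HTerm
open scoped Classical

variable {Sg : Signature}

/-- Chain measure of a term. -/
noncomputable def chainM {ρ : Subst Sg} (hρ : ρ.InRSF) : HTerm Sg → ℕ
  | .var z => vrank hρ z + 1
  | .app _ _ => 0

/-- The canonical solution labeling function. -/
noncomputable def resolve {ρ : Subst Sg} (hρ : ρ.InRSF) (v : ℕ → C Sg) :
    HTerm Sg → List ℕ → Option Sg.Sym
  | .var z, p => if z ∈ ρ.dom then resolve hρ v (ρ.map z) p else v z p
  | .app f _, [] => some f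
  | .app f ts, i :: p => if h : i < Sg.arity f then resolve hρ v (ts ⟨i, h⟩) p else none
termination_by t p => (p.length, chainM hρ t)
decreasing_by
  · apply Prod.Lex.right
    rcases hm : ρ.map z with z' | ⟨f, ts⟩
    · have := vrank_step hρ (by assumption) hm
      simp [chainM]; omega
    · simp [chainM]
  · apply Prod.Lex.left
    simp

lemma resolve_var_dom {ρ : Subst Sg} (hρ : ρ.InRSF) (v : ℕ → C Sg) {z : ℕ}
    (h : z ∈ ρ.dom) (p : List ℕ) :
    resolve hρ v (.var z) p = resolve hρ v (ρ.map z) p := by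
  rw [resolve]; rw [if_pos h]

lemma resolve_var_free {ρ : Subst Sg} (hρ : ρ.InRSF) (v : ℕ → C Sg) {z : ℕ}
    (h : z ∉ ρ.dom) (p : List ℕ) :
    resolve hρ v (.var z) p = v z p := by
  rw [resolve]; rw [if_neg h]

lemma resolve_app_nil {ρ : Subst Sg} (hρ : ρ.InRSF) (v : ℕ → C Sg) (f : Sg.Sym) (ts) :
    resolve hρ v (.app f ts) [] = some f := by
  rw [resolve]

lemma resolve_app_cons {ρ : Subst Sg} (hρ : ρ.InRSF) (v : ℕ → C Sg) (f : Sg.Sym) (ts)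
    (i : ℕ) (p : List ℕ) :
    resolve hρ v (.app f ts) (i :: p) =
      if h : i < Sg.arity f then resolve hρ v (ts ⟨i, h⟩) p else none := by
  rw [resolve]

/-- The canonical solution of `ρ` with parameter valuation `v`. -/
noncomputable def canonC {ρ : Subst Sg} (hρ : ρ.InRSF) (v : ℕ → C Sg) (z : ℕ) : C Sg :=
  fun p => resolve hρ v (.var z) p

lemma eval_canonC {ρ : Subst Sg} (hρ : ρ.InRSF) (v : ℕ → C Sg) (t : HTerm Sg) :
    HTerm.eval (strucC Sg) (canonC hρ v) t = fun p => resolve hρ v t p := by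
  induction t with
  | var z => rfl
  | app f ts ih =>
    funext p
    show Cinterp f (fun i => HTerm.eval (strucC Sg) (canonC hρ v) (ts i)) p = _
    cases p with
    | nil => erw [Cinterp_nil, resolve_app_nil]
    | cons i p =>
      erw [Cinterp_cons, resolve_app_cons]
      by_cases h : i < Sg.arity f
      · rw [dif_pos h, dif_pos h, ih]
      · rw [dif_neg h, dif_neg h]

lemma canonC_sat {ρ : Subst Sg} (hρ : ρ.InRSF) (v : ℕ → C Sg) :
    (strucC Sg).Sat (canonC hρ v) ρ.eqs := by
  rintro e ⟨x, hx, rfl⟩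
  show HTerm.eval (strucC Sg) (canonC hρ v) (.var x) = HTerm.eval _ _ (ρ.map x)
  rw [eval_canonC, eval_canonC]
  funext p
  exact resolve_var_dom hρ v hx p

lemma canonC_agree {ρ : Subst Sg} (hρ : ρ.InRSF) (v : ℕ → C Sg) {x : ℕ} (h : x ∉ ρ.dom) :
    canonC hρ v x = v x := by
  funext p; exact resolve_var_free hρ v h p

/-- Solutions of `ρ.eqs` agreeing off `dom ρ` are unique. -/
lemma uniqC {ρ : Subst Sg} (hρ : ρ.InRSF) (v : ℕ → C Sg) (w1 w2 : ℕ → C Sg)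
    (h1a : ∀ x ∉ ρ.dom, w1 x = v x) (h1b : (strucC Sg).Sat w1 ρ.eqs)
    (h2a : ∀ x ∉ ρ.dom, w2 x = v x) (h2b : (strucC Sg).Sat w2 ρ.eqs) :
    w1 = w2 := by
  have sat1 : ∀ z ∈ ρ.dom, w1 z = HTerm.eval (strucC Sg) w1 (ρ.map z) := by
    intro z hz; exact h1b _ ⟨z, hz, rfl⟩
  have sat2 : ∀ z ∈ ρ.dom, w2 z = HTerm.eval (strucC Sg) w2 (ρ.map z) := by
    intro z hz; exact h2b _ ⟨z, hz, rfl⟩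
  have main : ∀ n (p : List ℕ), p.length ≤ n → ∀ z, w1 z p = w2 z p := by
    intro n
    induction n with
    | zero =>
      intro p hp
      -- inner induction on rank
      have : ∀ k z, vrank hρ z ≤ k → w1 z p = w2 z p := by
        intro k
        induction k with
        | zero =>
          intro z hr
          by_cases hz : z ∈ ρ.dom
          · rcases hm : ρ.map z with z' | ⟨f, ts⟩
            · exact absurd (vrank_step hρ hz hm) (by omega)
            · rw [congrFun (sat1 z hz), congrFun (sat2 z hz), hm]
              have hp0 : p = [] := List.length_eq_zero_iff.mp (by omega)
              subst hp0
              rfl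
          · rw [h1a z hz, h2a z hz]
        | succ k ihk =>
          intro z hr
          by_cases hz : z ∈ ρ.dom
          · rcases hm : ρ.map z with z' | ⟨f, ts⟩
            · rw [congrFun (sat1 z hz), congrFun (sat2 z hz), hm]
              have := vrank_step hρ hz hm
              exact ihk z' (by omega)
            · rw [congrFun (sat1 z hz), congrFun (sat2 z hz), hm]
              have hp0 : p = [] := List.length_eq_zero_iff.mp (by omega)
              subst hp0
              rfl
          · rw [h1a z hz, h2a z hz]
      intro z; exact this (vrank hρ z) z le_rfl
    | succ n ihn =>
      intro p hp
      -- agreement of evals on shorter paths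
      have evag : ∀ (t : HTerm Sg) (q : List ℕ), q.length ≤ n →
          HTerm.eval (strucC Sg) w1 t q = HTerm.eval (strucC Sg) w2 t q := by
        intro t
        induction t with
        | var u => intro q hq; exact ihn q hq u
        | app f ts ih =>
          intro q hq
          show Cinterp f (fun j => HTerm.eval (strucC Sg) w1 (ts j)) q
            = Cinterp f (fun j => HTerm.eval (strucC Sg) w2 (ts j)) q
          cases q with
          | nil => rfl
          | cons i q' =>
            erw [Cinterp_cons, Cinterp_cons]
            by_cases h : i < Sg.arity f
            · rw [dif_pos h, dif_pos h]
              exact ih _ q' (by simp at hq; omega)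
            · rw [dif_neg h, dif_neg h]
      have : ∀ k z, vrank hρ z ≤ k → w1 z p = w2 z p := by
        intro k
        induction k with
        | zero =>
          intro z hr
          by_cases hz : z ∈ ρ.dom
          · rcases hm : ρ.map z with z' | ⟨f, ts⟩
            · exact absurd (vrank_step hρ hz hm) (by omega)
            · rw [congrFun (sat1 z hz), congrFun (sat2 z hz), hm]
              cases p with
              | nil => rfl
              | cons i p' =>
                show Cinterp f (fun j => HTerm.eval (strucC Sg) w1 (ts j)) (i :: p')
                  = Cinterp f (fun j => HTerm.eval (strucC Sg) w2 (ts j)) (i :: p')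
                erw [Cinterp_cons, Cinterp_cons]
                by_cases h : i < Sg.arity f
                · rw [dif_pos h, dif_pos h]
                  exact evag _ p' (by simp at hp; omega)
                · rw [dif_neg h, dif_neg h]
          · rw [h1a z hz, h2a z hz]
        | succ k ihk =>
          intro z hr
          by_cases hz : z ∈ ρ.dom
          · rcases hm : ρ.map z with z' | ⟨f, ts⟩
            · rw [congrFun (sat1 z hz), congrFun (sat2 z hz), hm]
              have := vrank_step hρ hz hm
              exact ihk z' (by omega)
            · rw [congrFun (sat1 z hz), congrFun (sat2 z hz), hm]
              cases p with
              | nil => rfl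
              | cons i p' =>
                show Cinterp f (fun j => HTerm.eval (strucC Sg) w1 (ts j)) (i :: p')
                  = Cinterp f (fun j => HTerm.eval (strucC Sg) w2 (ts j)) (i :: p')
                erw [Cinterp_cons, Cinterp_cons]
                by_cases h : i < Sg.arity f
                · rw [dif_pos h, dif_pos h]
                  exact evag _ p' (by simp at hp; omega)
                · rw [dif_neg h, dif_neg h]
          · rw [h1a z hz, h2a z hz]
      intro z; exact this (vrank hρ z) z le_rfl
  funext z p
  exact main p.length p le_rfl z

/-- The model of (junky) infinite trees is a model of RT. -/
noncomputable def modelC (Sg : Signature) : RTModel Sg where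
  struc := strucC Sg
  inj := Cinterp_inj
  distinct := Cinterp_distinct
  uniqueness := by
    intro σ hσ v
    refine ⟨canonC hσ v, ⟨fun x hx => canonC_agree hσ v hx, canonC_sat hσ v⟩, ?_⟩
    rintro w ⟨hwa, hwb⟩
    exact uniqC hσ v w (canonC hσ v) hwa hwb
      (fun x hx => canonC_agree hσ v hx) (canonC_sat hσ v)

end AMGU
namespace AMGU

open HTerm
open scoped Classical

variable {Sg : Signature}

/-- Shorthand for evaluation in the tree model. -/
noncomputable abbrev evC (w : ℕ → C Sg) (t : HTerm Sg) : C Sg :=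
  HTerm.eval (strucC Sg) w t

lemma evC_var (w : ℕ → C Sg) (z : ℕ) : evC w (.var z) = w z := rfl

lemma evC_app (w : ℕ → C Sg) (f : Sg.Sym) (ts) :
    evC w (.app f ts) = Cinterp f (fun i => evC w (ts i)) := rfl

/-- Finiteness of an element of the tree model. -/
def finC (c : C Sg) : Prop := {p : List ℕ | (c p).isSome}.Finite

lemma finC_none : finC (fun _ => (none : Option Sg.Sym)) := by
  simp [finC]

/-- vars of a finite term form a finite set. -/
lemma varsIn_finite (t : HTerm Sg) : t.varsIn.Finite := by
  induction t with
  | var z => exact Set.finite_singleton z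
  | app f ts ih => exact Set.finite_iUnion ih

/-- every variable of a term occurs at some path. -/
lemma occ_exists {t : HTerm Sg} {z : ℕ} (h : z ∈ t.varsIn) :
    ∃ q, t.labelAt q = some (Sum.inr z) := by
  induction t with
  | var y =>
    rcases h with rfl
    exact ⟨[], rfl⟩
  | app f ts ih =>
    rcases Set.mem_iUnion.mp h with ⟨i, hi⟩
    rcases ih i hi with ⟨q, hq⟩
    exact ⟨i.val :: q, by simp [labelAt, i.isLt, hq]⟩

/-- labels at var paths are vars of the term. -/
lemma occ_mem {t : HTerm Sg} {z : ℕ} {q : List ℕ} (h : t.labelAt q = some (Sum.inr z)) :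
    z ∈ t.varsIn := by
  induction t generalizing q with
  | var y =>
    cases q with
    | nil => simp [labelAt] at h; simp [varsIn, h]
    | cons i q => simp [labelAt] at h
  | app f ts ih =>
    cases q with
    | nil => simp [labelAt] at h
    | cons i q =>
      simp only [labelAt] at h
      by_cases hi : i < Sg.arity f
      · rw [dif_pos hi] at h
        exact Set.mem_iUnion.mpr ⟨⟨i, hi⟩, ih _ h⟩
      · rw [dif_neg hi] at h; exact absurd h (by simp)

lemma treeVars_labelAt (t : HTerm Sg) : treeVars t.labelAt = t.varsIn := by
  ext z
  constructor
  · rintro ⟨p, hp⟩; exact occ_mem hp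
  · intro h; exact occ_exists h

/-- evaluation below a variable leaf. -/
lemma evC_prefix {t : HTerm Sg} {z : ℕ} {q : List ℕ}
    (h : t.labelAt q = some (Sum.inr z)) (w : ℕ → C Sg) (p : List ℕ) :
    evC w t (q ++ p) = w z p := by
  induction t generalizing q with
  | var y =>
    cases q with
    | nil =>
      simp only [labelAt, Option.some.injEq, Sum.inr.injEq] at h
      subst h; rfl
    | cons i q => simp [labelAt] at h
  | app f ts ih =>
    cases q with
    | nil => simp [labelAt] at h
    | cons i q =>
      simp only [labelAt] at h
      by_cases hi : i < Sg.arity f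
      · rw [dif_pos hi] at h
        rw [evC_app]
        show Cinterp f _ (i :: (q ++ p)) = _
        rw [Cinterp_cons, dif_pos hi]
        exact ih _ h
      · rw [dif_neg hi] at h; exact absurd h (by simp)

/-- evaluation at symbol nodes. -/
lemma evC_symbol {t : HTerm Sg} {f : Sg.Sym} {q : List ℕ}
    (h : t.labelAt q = some (Sum.inl f)) (w : ℕ → C Sg) :
    evC w t q = some f := by
  induction t generalizing q with
  | var y =>
    cases q with
    | nil => simp [labelAt] at h
    | cons i q => simp [labelAt] at h
  | app g ts ih =>
    cases q with
    | nil =>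
      simp only [labelAt, Option.some.injEq, Sum.inl.injEq] at h
      subst h; rfl
    | cons i q =>
      simp only [labelAt] at h
      by_cases hi : i < Sg.arity g
      · rw [dif_pos hi] at h
        rw [evC_app]
        show Cinterp g _ (i :: q) = _
        rw [Cinterp_cons, dif_pos hi]
        exact ih _ h
      · rw [dif_neg hi] at h; exact absurd h (by simp)

/-- graft of finite trees on a finite term is finite. -/
lemma finC_evC {t : HTerm Sg} {w : ℕ → C Sg} (hw : ∀ z ∈ t.varsIn, finC (w z)) :
    finC (evC w t) := by
  induction t with
  | var z => exact hw z rfl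
  | app f ts ih =>
    have : {p : List ℕ | ((evC w (.app f ts)) p).isSome} ⊆
        {([] : List ℕ)} ∪ ⋃ i : Fin (Sg.arity f),
          (fun p => (i.val :: p)) '' {p | ((evC w (ts i)) p).isSome} := by
      intro p hp
      cases p with
      | nil => exact Or.inl rfl
      | cons i p =>
        right
        simp only [Set.mem_setOf_eq] at hp
        rw [evC_app] at hp
        rw [show (Cinterp f (fun i => evC w (ts i)) (i :: p)) =
          if h : i < Sg.arity f then evC w (ts ⟨i, h⟩) p else none from rfl] at hp
        by_cases hi : i < Sg.arity f
        · rw [dif_pos hi] at hp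
          exact Set.mem_iUnion.mpr ⟨⟨i, hi⟩, ⟨p, hp, rfl⟩⟩
        · rw [dif_neg hi] at hp; simp at hp
    apply Set.Finite.subset _ this
    apply Set.Finite.union (Set.finite_singleton _)
    apply Set.finite_iUnion
    intro i
    apply Set.Finite.image
    exact ih i (fun z hz => hw z (Set.mem_iUnion.mpr ⟨i, hz⟩))

/-! ### hvars and stabilization -/

lemma hvarsN_mono {ρ : Subst Sg} : Monotone ρ.hvarsN := by
  apply monotone_nat_of_le_succ
  intro n
  intro z hz
  exact Or.inl hz

lemma hvarsN_map {ρ : Subst Sg} {z : ℕ} {n : ℕ} (hz : z ∈ ρ.hvarsN n) (hd : z ∈ ρ.dom) :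
    (ρ.map z).varsIn ⊆ ρ.hvarsN n := by
  induction n with
  | zero => exact absurd hd hz
  | succ n ih =>
    rcases hz with hz | ⟨_, hz⟩
    · exact (ih hz).trans (hvarsN_mono (Nat.le_succ n))
    · exact hz.trans (hvarsN_mono (Nat.le_succ n))

lemma apply_varsIn {ρ : Subst Sg} {t : HTerm Sg} {n : ℕ}
    (h : t.varsIn ⊆ ρ.hvarsN (n+1)) : (ρ.apply t).varsIn ⊆ ρ.hvarsN n := by
  induction t with
  | var z =>
    have hz := h (show z ∈ varsIn (.var z) from rfl)
    by_cases hd : z ∈ ρ.dom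
    · rcases hz with hz | ⟨_, hz⟩
      · exact hvarsN_map hz hd
      · exact hz
    · show (ρ.map z).varsIn ⊆ _
      have hz' : ρ.map z = HTerm.var z := of_not_not (fun hne => hd hne)
      rw [hz']
      intro u hu
      have hu' : u = z := hu
      subst hu'
      by_cases h0 : u ∈ ρ.dom
      · exact absurd h0 hd
      · exact hvarsN_mono (Nat.zero_le n) h0
  | app f ts ih =>
    intro u hu
    rcases Set.mem_iUnion.mp hu with ⟨i, hi⟩
    exact ih i (fun y hy => h (Set.mem_iUnion.mpr ⟨i, hy⟩)) hi

lemma iter_varsIn {ρ : Subst Sg} {t : HTerm Sg} {n : ℕ}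
    (h : t.varsIn ⊆ ρ.hvarsN n) : ∀ z ∈ (ρ.iter n t).varsIn, z ∉ ρ.dom := by
  induction n generalizing t with
  | zero =>
    intro z hz
    exact h hz
  | succ n ih =>
    intro z hz
    have : ρ.iter (n+1) t = ρ.iter n (ρ.apply t) := Function.iterate_succ_apply _ n t
    rw [this] at hz
    exact ih (apply_varsIn h) z hz

lemma apply_fix {ρ : Subst Sg} {t : HTerm Sg} (h : ∀ z ∈ t.varsIn, z ∉ ρ.dom) :
    ρ.apply t = t := by
  induction t with
  | var z =>
    have := h z rfl
    show ρ.map z = _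
    exact of_not_not this
  | app f ts ih =>
    show HTerm.app f (fun i => ρ.apply (ts i)) = _
    have : (fun i => ρ.apply (ts i)) = ts :=
      funext fun i => ih i (fun z hz => h z (Set.mem_iUnion.mpr ⟨i, hz⟩))
    rw [this]

lemma iter_stable {ρ : Subst Sg} {t : HTerm Sg} {n : ℕ}
    (h : ∀ z ∈ (ρ.iter n t).varsIn, z ∉ ρ.dom) :
    ∀ m, n ≤ m → ρ.iter m t = ρ.iter n t := by
  intro m hm
  obtain ⟨k, rfl⟩ := Nat.exists_eq_add_of_le hm
  induction k with
  | zero => rfl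
  | succ k ih =>
    show ρ.iter (n + k + 1) t = _
    have : ρ.iter (n + k + 1) t = ρ.apply (ρ.iter (n+k) t) :=
      Function.iterate_succ_apply' _ _ t
    rw [this, ih (by omega)]
    exact apply_fix h

/-- rt of a stabilized term. -/
lemma rt_eq_labelAt {ρ : Subst Sg} {t : HTerm Sg} {n : ℕ}
    (h : ∀ z ∈ (ρ.iter n t).varsIn, z ∉ ρ.dom) :
    ρ.rt t = (ρ.iter n t).labelAt := by
  funext p
  have hstab := iter_stable h
  have hex : ∃ v : Option (Sg.Sym ⊕ ℕ), ∃ N : ℕ, ∀ i ≥ N, (ρ.iter i t).labelAt p = v :=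
    ⟨(ρ.iter n t).labelAt p, n, fun i hi => by rw [hstab i hi]⟩
  show dite _ _ _ = _
  rw [dif_pos hex]
  obtain ⟨N, hN⟩ := hex.choose_spec
  have h1 := hN (max n N) (le_max_right _ _)
  rw [hstab (max n N) (le_max_left _ _)] at h1
  exact h1.symm

/-- hvars membership yields a stabilized iterate. -/
lemma hvars_stab {ρ : Subst Sg} {t : HTerm Sg} (h : t.varsIn ⊆ ρ.hvars) :
    ∃ n, ∀ z ∈ (ρ.iter n t).varsIn, z ∉ ρ.dom := by
  -- find a uniform level n
  have : ∃ n, t.varsIn ⊆ ρ.hvarsN n := by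
    have hfin := varsIn_finite t
    -- for each var pick a level
    have : ∀ z ∈ t.varsIn, ∃ n, z ∈ ρ.hvarsN n := by
      intro z hz
      exact Set.mem_iUnion.mp (h hz)
    choose! g hg using this
    rcases Set.Finite.bddAbove (hfin.image g) with ⟨B, hB⟩
    refine ⟨B, fun z hz => hvarsN_mono (hB (Set.mem_image_of_mem g hz)) (hg z hz)⟩
  obtain ⟨n, hn⟩ := this
  exact ⟨n, iter_varsIn hn⟩

/-- closure property of hvars. -/
lemma hvars_of_map {ρ : Subst Sg} {y : ℕ} (hd : y ∈ ρ.dom)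
    (h : (ρ.map y).varsIn ⊆ ρ.hvars) : y ∈ ρ.hvars := by
  have : ∃ n, (ρ.map y).varsIn ⊆ ρ.hvarsN n := by
    have hfin := varsIn_finite (ρ.map y)
    have : ∀ z ∈ (ρ.map y).varsIn, ∃ n, z ∈ ρ.hvarsN n := by
      intro z hz
      exact Set.mem_iUnion.mp (h hz)
    choose! g hg using this
    rcases Set.Finite.bddAbove (hfin.image g) with ⟨B, hB⟩
    refine ⟨B, fun z hz => hvarsN_mono (hB (Set.mem_image_of_mem g hz)) (hg z hz)⟩
  obtain ⟨n, hn⟩ := this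
  exact Set.mem_iUnion.mpr ⟨n+1, Or.inr ⟨hd, hn⟩⟩

lemma hvars_of_not_dom {ρ : Subst Sg} {y : ℕ} (h : y ∉ ρ.dom) : y ∈ ρ.hvars :=
  Set.mem_iUnion.mpr ⟨0, h⟩

/-- substitution lemma: solutions absorb applications. -/
lemma evC_apply {ρ : Subst Sg} {w : ℕ → C Sg} (hw : (strucC Sg).Sat w ρ.eqs)
    (t : HTerm Sg) : evC w (ρ.apply t) = evC w t := by
  induction t with
  | var z =>
    by_cases hd : z ∈ ρ.dom
    · exact (hw _ ⟨z, hd, rfl⟩).symm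
    · show evC w (ρ.map z) = _
      have hz' : ρ.map z = HTerm.var z := of_not_not (fun hne => hd hne)
      rw [hz']
  | app f ts ih =>
    show Cinterp f (fun i => evC w (ρ.apply (ts i))) = Cinterp f (fun i => evC w (ts i))
    exact congrArg (Cinterp f) (funext fun i => ih i)

lemma evC_iter {ρ : Subst Sg} {w : ℕ → C Sg} (hw : (strucC Sg).Sat w ρ.eqs)
    (t : HTerm Sg) (n : ℕ) : evC w (ρ.iter n t) = evC w t := by
  induction n with
  | zero => rfl
  | succ n ih =>
    have : ρ.iter (n+1) t = ρ.apply (ρ.iter n t) := Function.iterate_succ_apply' _ _ t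
    rw [this, evC_apply hw, ih]

end AMGU
namespace AMGU

open HTerm
open scoped Classical

variable {Sg : Signature}

lemma not_hvars_dom {τ : Subst Sg} {y : ℕ} (h : y ∉ τ.hvars) : y ∈ τ.dom := by
  by_contra hd
  exact h (hvars_of_not_dom hd)

lemma not_hvars_var {τ : Subst Sg} {y z : ℕ} (h : y ∉ τ.hvars)
    (hm : τ.map y = HTerm.var z) : z ∉ τ.hvars := by
  intro hz
  apply h
  apply hvars_of_map (not_hvars_dom h)
  rw [hm]
  intro u hu
  have hu' : u = z := hu
  subst hu'
  exact hz

/-- chase variable chains to an application binding. -/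
lemma chase_app {τ : Subst Sg} (hτ : τ.InRSF) {w : ℕ → C Sg}
    (hw : (strucC Sg).Sat w τ.eqs) {y : ℕ} (h : y ∉ τ.hvars) :
    ∃ y', w y = w y' ∧ y' ∉ τ.hvars ∧ ∃ f ts, τ.map y' = HTerm.app f ts := by
  have : ∀ k y, vrank hτ y ≤ k → y ∉ τ.hvars →
      ∃ y', w y = w y' ∧ y' ∉ τ.hvars ∧ ∃ f ts, τ.map y' = HTerm.app f ts := by
    intro k
    induction k with
    | zero =>
      intro y hr h
      have hd := not_hvars_dom h
      rcases hm : τ.map y with z | ⟨f, ts⟩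
      · exact absurd (vrank_step hτ hd hm) (by omega)
      · exact ⟨y, rfl, h, f, ts, hm⟩
    | succ k ih =>
      intro y hr h
      have hd := not_hvars_dom h
      rcases hm : τ.map y with z | ⟨f, ts⟩
      · have hz := not_hvars_var h hm
        have hwz : w y = w z := by
          have := hw _ ⟨y, hd, rfl⟩
          rw [hm] at this
          exact this
        have := vrank_step hτ hd hm
        obtain ⟨y', h1, h2, h3⟩ := ih z (by omega) hz
        exact ⟨y', hwz.trans h1, h2, h3⟩
      · exact ⟨y, rfl, h, f, ts, hm⟩
  exact this (vrank hτ y) y le_rfl h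

/-- solutions are infinite (unboundedly deep) at non-hvars variables. -/
lemma not_hvars_deep {τ : Subst Sg} (hτ : τ.InRSF) {w : ℕ → C Sg}
    (hw : (strucC Sg).Sat w τ.eqs) :
    ∀ n, ∀ y ∉ τ.hvars, ∃ p : List ℕ, n ≤ p.length ∧ (w y p).isSome := by
  intro n
  induction n with
  | zero =>
    intro y hy
    obtain ⟨y', hwy, hy', f, ts, hm⟩ := chase_app hτ hw hy
    refine ⟨[], by omega, ?_⟩
    rw [hwy]
    have : w y' = evC w (τ.map y') := hw _ ⟨y', not_hvars_dom hy', rfl⟩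
    rw [this, hm]
    rfl
  | succ n ih =>
    intro y hy
    obtain ⟨y', hwy, hy', f, ts, hm⟩ := chase_app hτ hw hy
    -- find a non-hvars variable in the binding
    have hnsub : ¬ (τ.map y').varsIn ⊆ τ.hvars := by
      intro hsub
      exact hy' (hvars_of_map (not_hvars_dom hy') hsub)
    rcases Set.not_subset.mp hnsub with ⟨z, hz1, hz2⟩
    obtain ⟨q, hq⟩ := occ_exists hz1
    have hq0 : q ≠ [] := by
      intro h0
      subst h0
      rw [hm] at hq
      simp [labelAt] at hq
    obtain ⟨p, hp1, hp2⟩ := ih z hz2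
    refine ⟨q ++ p, ?_, ?_⟩
    · have : 1 ≤ q.length := by
        cases q with
        | nil => exact absurd rfl hq0
        | cons a q => simp
      simp only [List.length_append]
      omega
    · rw [hwy]
      have : w y' = evC w (τ.map y') := hw _ ⟨y', not_hvars_dom hy', rfl⟩
      rw [this, evC_prefix hq w p]
      exact hp2
/-- finite elements have bounded depth, so: -/
lemma hvars_of_finC {τ : Subst Sg} (hτ : τ.InRSF) {w : ℕ → C Sg}
    (hw : (strucC Sg).Sat w τ.eqs) {y : ℕ} (hfin : finC (w y)) : y ∈ τ.hvars := by
  by_contra hy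
  have hbdd := Set.Finite.bddAbove (hfin.image List.length)
  rcases hbdd with ⟨B, hB⟩
  obtain ⟨p, hp1, hp2⟩ := not_hvars_deep hτ hw (B+1) y hy
  have : p.length ≤ B := hB ⟨p, hp2, rfl⟩
  omega

end AMGU
namespace AMGU

open HTerm
open scoped Classical

variable {Sg : Signature}

lemma evC_congr {w1 w2 : ℕ → C Sg} {t : HTerm Sg}
    (h : ∀ z ∈ t.varsIn, w1 z = w2 z) : evC w1 t = evC w2 t := by
  induction t with
  | var z => exact h z rfl
  | app f ts ih =>
    show Cinterp f (fun i => evC w1 (ts i)) = Cinterp f (fun i => evC w2 (ts i))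
    exact congrArg _ (funext fun i => ih i (fun z hz => h z (Set.mem_iUnion.mpr ⟨i, hz⟩)))

lemma finC_canonC {μ : Subst Sg} (hμ : μ.InRSF) {v : ℕ → C Sg}
    (hv : ∀ z, finC (v z)) : ∀ y ∈ μ.hvars, finC (canonC hμ v y) := by
  have : ∀ n y, y ∈ μ.hvarsN n → finC (canonC hμ v y) := by
    intro n
    induction n with
    | zero =>
      intro y hy
      rw [canonC_agree hμ v hy]
      exact hv y
    | succ n ih =>
      intro y hy
      rcases hy with hy | ⟨hd, hy⟩
      · exact ih y hy
      · have : canonC hμ v y = evC (canonC hμ v) (μ.map y) :=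
          canonC_sat hμ v _ ⟨y, hd, rfl⟩
        rw [this]
        exact finC_evC (fun z hz => ih z (hy hz))
  intro y hy
  rcases Set.mem_iUnion.mp hy with ⟨n, hn⟩
  exact this n y hn

/-! ### Subterms -/

/-- subterm relation. -/
inductive IsSub : HTerm Sg → HTerm Sg → Prop
  | refl (t : HTerm Sg) : IsSub t t
  | app {t : HTerm Sg} {f : Sg.Sym} {ts : Fin (Sg.arity f) → HTerm Sg} (i) :
      IsSub t (ts i) → IsSub t (.app f ts)

lemma IsSub.vars_subset {a t : HTerm Sg} (h : IsSub a t) : a.varsIn ⊆ t.varsIn := by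
  induction h with
  | refl => exact le_refl _
  | app i _ ih => exact ih.trans (fun z hz => Set.mem_iUnion.mpr ⟨_, hz⟩)

/-! ### The semantic solved form for a pair of terms -/

section Core

variable (S T : HTerm Sg) (w0 : ℕ → C Sg)

/-- subterms of `S` or `T`. -/
def SubST (b : HTerm Sg) : Prop := IsSub b S ∨ IsSub b T

/-- variables of `S` or `T`. -/
def VST : Set ℕ := S.varsIn ∪ T.varsIn

lemma VST_finite : (VST S T).Finite := (varsIn_finite S).union (varsIn_finite T)

/-- a variable admitting a non-variable subterm witness of the same value. -/
def BVp (v : ℕ) : Prop :=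
  ∃ b : HTerm Sg, SubST S T b ∧ (∀ u : ℕ, b ≠ .var u) ∧ evC w0 b = w0 v

noncomputable def bch {v : ℕ} (h : BVp S T w0 v) : HTerm Sg := h.choose

lemma bch_spec {v : ℕ} (h : BVp S T w0 v) :
    SubST S T (bch S T w0 h) ∧ (∀ u : ℕ, bch S T w0 h ≠ .var u) ∧
      evC w0 (bch S T w0 h) = w0 v := h.choose_spec

/-- representative of the value class of `v` among `VST`. -/
noncomputable def repOf (v : ℕ) : ℕ := sInf {u | u ∈ VST S T ∧ w0 u = w0 v}

lemma repOf_spec {v : ℕ} (hv : v ∈ VST S T) :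
    repOf S T w0 v ∈ VST S T ∧ w0 (repOf S T w0 v) = w0 v := by
  have : v ∈ {u | u ∈ VST S T ∧ w0 u = w0 v} := ⟨hv, rfl⟩
  exact Nat.sInf_mem (Set.nonempty_of_mem this)

lemma repOf_eq {v u : ℕ} (hv : v ∈ VST S T) (hu : u ∈ VST S T)
    (h : w0 v = w0 u) : repOf S T w0 v = repOf S T w0 u := by
  unfold repOf
  rw [show {u' | u' ∈ VST S T ∧ w0 u' = w0 v} = {u' | u' ∈ VST S T ∧ w0 u' = w0 u} by
    ext u'; simp [h]]

lemma repOf_rep {v : ℕ} (hv : v ∈ VST S T) :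
    repOf S T w0 (repOf S T w0 v) = repOf S T w0 v := by
  obtain ⟨h1, h2⟩ := repOf_spec S T w0 hv
  exact repOf_eq S T w0 h1 hv h2

/-- The solved form substitution. -/
noncomputable def muST : Subst Sg where
  map := fun v =>
    if hv : v ∈ VST S T then
      (if h : BVp S T w0 v then bch S T w0 h
       else (if repOf S T w0 v = v then .var v else .var (repOf S T w0 v)))
    else .var v
  finite := by
    apply Set.Finite.subset (VST_finite S T)
    intro v hv
    simp only [Set.mem_setOf_eq] at hv
    by_contra hvn
    rw [dif_neg hvn] at hv
    exact hv rfl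

lemma muST_bv {v : ℕ} (hv : v ∈ VST S T) (h : BVp S T w0 v) :
    (muST S T w0).map v = bch S T w0 h := by
  unfold muST; simp only [dif_pos hv, dif_pos h]

lemma muST_rep {v : ℕ} (hv : v ∈ VST S T) (h : ¬ BVp S T w0 v) :
    (muST S T w0).map v =
      (if repOf S T w0 v = v then .var v else .var (repOf S T w0 v)) := by
  unfold muST; simp only [dif_pos hv, dif_neg h]

lemma muST_free {v : ℕ} (hv : v ∉ VST S T) : (muST S T w0).map v = .var v := by
  unfold muST; simp only [dif_neg hv]

/-- BVp is a value-class property. -/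
lemma BVp_congr {v u : ℕ} (h : w0 v = w0 u) : BVp S T w0 v → BVp S T w0 u := by
  rintro ⟨b, h1, h2, h3⟩
  exact ⟨b, h1, h2, h3.trans h⟩

lemma rep_not_dom {v : ℕ} (hv : v ∈ VST S T) (h : ¬ BVp S T w0 v) :
    repOf S T w0 v ∉ (muST S T w0).dom := by
  intro hd
  obtain ⟨hr1, hr2⟩ := repOf_spec S T w0 hv
  have hbr : ¬ BVp S T w0 (repOf S T w0 v) := fun hb => h (BVp_congr S T w0 hr2 hb)
  have := muST_rep S T w0 hr1 hbr
  rw [repOf_rep S T w0 hv] at this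
  rw [if_pos rfl] at this
  exact hd this

lemma muST_rsf : (muST S T w0).InRSF := by
  intro Q hQ hcirc
  obtain ⟨n, hn, xf, hinj, hQeq⟩ := hcirc
  -- the pair (xf 0, var (xf 1)) is a binding, so xf 0 maps to a variable
  have h0 : (xf 0, HTerm.var (xf ((0+1) % n))) ∈ Q := by
    rw [hQeq]; exact ⟨0, by omega, rfl⟩
  have h1 : (xf 1, HTerm.var (xf ((1+1) % n))) ∈ Q := by
    rw [hQeq]; exact ⟨1, by omega, rfl⟩
  obtain ⟨hd0, hm0⟩ := hQ h0
  obtain ⟨hd1, hm1⟩ := hQ h1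
  simp only at hm0 hm1
  -- from hm0 : map (xf 0) = var (xf 1 % n): so xf 0 is a rep-binding
  have hmod0 : (0+1) % n = 1 := by
    rw [Nat.mod_eq_of_lt (by omega)]
  rw [hmod0] at hm0
  -- xf 0 ∈ VST and not BVp (otherwise bch is not a var)
  by_cases hv0 : xf 0 ∈ VST S T
  · by_cases hb0 : BVp S T w0 (xf 0)
    · rw [muST_bv S T w0 hv0 hb0] at hm0
      exact (bch_spec S T w0 hb0).2.1 _ hm0.symm
    · rw [muST_rep S T w0 hv0 hb0] at hm0
      by_cases hr : repOf S T w0 (xf 0) = xf 0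
      · rw [if_pos hr] at hm0
        have : xf 0 = xf 1 := by
          have h5 := HTerm.var.inj hm0
          omega
        have := hinj 0 1 (by omega) (by omega) this
        omega
      · rw [if_neg hr] at hm0
        have hx1 : xf 1 = repOf S T w0 (xf 0) := HTerm.var.inj hm0
        have := rep_not_dom S T w0 hv0 hb0
        rw [← hx1] at this
        exact this hd1
  · exact hd0 (muST_free S T w0 hv0)

end Core

end AMGU
namespace AMGU

open HTerm
open scoped Classical

variable {Sg : Signature}

lemma IsSub.trans {a b c : HTerm Sg} (h1 : IsSub a b) (h2 : IsSub b c) : IsSub a c := by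
  induction h2 with
  | refl => exact h1
  | app i _ ih => exact IsSub.app i ih

lemma SubST_child {S T : HTerm Sg} {f : Sg.Sym} {ts : Fin (Sg.arity f) → HTerm Sg}
    (h : SubST S T (.app f ts)) (i : Fin (Sg.arity f)) : SubST S T (ts i) := by
  rcases h with h | h
  · exact Or.inl (IsSub.trans (IsSub.app i (IsSub.refl _)) h)
  · exact Or.inr (IsSub.trans (IsSub.app i (IsSub.refl _)) h)

lemma SubST_var_mem {S T : HTerm Sg} {v : ℕ} (h : SubST S T (.var v)) : v ∈ VST S T := by
  rcases h with h | h
  · exact Or.inl (h.vars_subset rfl)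
  · exact Or.inr (h.vars_subset rfl)

section Core

variable (S T : HTerm Sg) (w0 : ℕ → C Sg)

/-- the canonical solution of the solved form. -/
noncomputable def gST : ℕ → C Sg := canonC (muST_rsf S T w0) (fun _ _ => none)

lemma gST_eq (v : ℕ) : gST S T w0 v = evC (gST S T w0) ((muST S T w0).map v) := by
  by_cases hd : v ∈ (muST S T w0).dom
  · exact canonC_sat (muST_rsf S T w0) _ _ ⟨v, hd, rfl⟩
  · have : (muST S T w0).map v = .var v := of_not_not (fun h => hd h)
    rw [this]
    rfl

lemma gST_rep {v : ℕ} (hv : v ∈ VST S T) (hb : ¬ BVp S T w0 v) :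
    gST S T w0 v = gST S T w0 (repOf S T w0 v) := by
  by_cases hr : repOf S T w0 v = v
  · rw [hr]
  · have h1 := gST_eq S T w0 v
    rw [muST_rep S T w0 hv hb, if_neg hr] at h1
    exact h1

/-- The main satisfaction lemma. -/
lemma satST (hsol : evC w0 S = evC w0 T) :
    ∀ n (p : List ℕ), p.length ≤ n → ∀ a b : HTerm Sg, SubST S T a → SubST S T b →
      evC w0 a = evC w0 b → evC (gST S T w0) a p = evC (gST S T w0) b p := by
  intro n
  induction n with
  | zero =>
    intro p hp a b ha hb hc
    -- resolve both sides to non-variables or handle pure classes; at depth 0 we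
    -- only compare root labels
    have hp0 : p = [] := List.length_eq_zero_iff.mp (by omega)
    subst hp0
    -- an auxiliary handler for the app-app case at []
    have AA : ∀ (f f' : Sg.Sym) (as : Fin (Sg.arity f) → HTerm Sg)
        (bs : Fin (Sg.arity f') → HTerm Sg),
        evC w0 (.app f as) = evC w0 (.app f' bs) →
        evC (gST S T w0) (.app f as) [] = evC (gST S T w0) (.app f' bs) [] := by
      intro f f' as bs hc
      have : some f = some f' := by
        have := congrFun hc ([] : List ℕ)
        exact this
      have hff : f = f' := by injection this
      subst hff
      rfl
    cases a with
    | var v =>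
      cases b with
      | var u =>
        have hveq : w0 v = w0 u := hc
        have hvm := SubST_var_mem ha
        have hum := SubST_var_mem hb
        by_cases hbv : BVp S T w0 v
        · have hbu : BVp S T w0 u := BVp_congr S T w0 hveq hbv
          have e1 : evC (gST S T w0) (.var v) = evC (gST S T w0) (bch S T w0 hbv) := by
            rw [show evC (gST S T w0) (.var v) = gST S T w0 v from rfl, gST_eq,
              muST_bv S T w0 hvm hbv]
          have e2 : evC (gST S T w0) (.var u) = evC (gST S T w0) (bch S T w0 hbu) := by
            rw [show evC (gST S T w0) (.var u) = gST S T w0 u from rfl, gST_eq,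
              muST_bv S T w0 hum hbu]
          rw [show evC (gST S T w0) (var v) [] = evC (gST S T w0) (var v) [] from rfl]
          rw [congrFun e1 [], congrFun e2 []]
          obtain ⟨hs1, hn1, he1⟩ := bch_spec S T w0 hbv
          obtain ⟨hs2, hn2, he2⟩ := bch_spec S T w0 hbu
          obtain ⟨g1, cs1, h1⟩ : ∃ gg ccs, bch S T w0 hbv = HTerm.app gg ccs := by
            cases hx : bch S T w0 hbv with
            | var zz => exact absurd hx (hn1 _)
            | app gg ccs => exact ⟨gg, ccs, rfl⟩
          obtain ⟨g2, cs2, h2⟩ : ∃ gg ccs, bch S T w0 hbu = HTerm.app gg ccs := by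
            cases hx : bch S T w0 hbu with
            | var zz => exact absurd hx (hn2 _)
            | app gg ccs => exact ⟨gg, ccs, rfl⟩
          rw [h1] at he1
          rw [h2] at he2
          rw [h1, h2]
          exact AA _ _ _ _ (by rw [he1, he2, hveq])
        · have hbu : ¬ BVp S T w0 u := fun h => hbv (BVp_congr S T w0 hveq.symm h)
          show gST S T w0 v [] = gST S T w0 u []
          rw [gST_rep S T w0 hvm hbv, gST_rep S T w0 hum hbu,
            repOf_eq S T w0 hvm hum hveq]
      | app f' bs =>
        have hvm := SubST_var_mem ha
        have hbv : BVp S T w0 v :=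
          ⟨.app f' bs, hb, by intro u h; exact absurd h (by simp), hc.symm⟩
        have e1 : evC (gST S T w0) (.var v) = evC (gST S T w0) (bch S T w0 hbv) := by
          rw [show evC (gST S T w0) (.var v) = gST S T w0 v from rfl, gST_eq,
            muST_bv S T w0 hvm hbv]
        rw [congrFun e1 []]
        obtain ⟨hs1, hn1, he1⟩ := bch_spec S T w0 hbv
        obtain ⟨g1, cs1, h1⟩ : ∃ gg ccs, bch S T w0 hbv = HTerm.app gg ccs := by
          cases hx : bch S T w0 hbv with
          | var zz => exact absurd hx (hn1 _)
          | app gg ccs => exact ⟨gg, ccs, rfl⟩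
        rw [h1] at he1
        rw [h1]
        exact AA _ _ _ _ (by rw [he1]; exact hc)
    | app f as =>
      cases b with
      | var u =>
        have hum := SubST_var_mem hb
        have hbu : BVp S T w0 u :=
          ⟨.app f as, ha, by intro z h; exact absurd h (by simp), hc⟩
        have e2 : evC (gST S T w0) (.var u) = evC (gST S T w0) (bch S T w0 hbu) := by
          rw [show evC (gST S T w0) (.var u) = gST S T w0 u from rfl, gST_eq,
            muST_bv S T w0 hum hbu]
        rw [congrFun e2 []]
        obtain ⟨hs2, hn2, he2⟩ := bch_spec S T w0 hbu
        obtain ⟨g2, cs2, h2⟩ : ∃ gg ccs, bch S T w0 hbu = HTerm.app gg ccs := by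
          cases hx : bch S T w0 hbu with
          | var zz => exact absurd hx (hn2 _)
          | app gg ccs => exact ⟨gg, ccs, rfl⟩
        rw [h2] at he2
        rw [h2]
        exact AA _ _ _ _ (by rw [he2]; exact hc)
      | app f' bs => exact AA _ _ _ _ hc
  | succ n ihn =>
    intro p hp a b ha hb hc
    have AA : ∀ (f f' : Sg.Sym) (as : Fin (Sg.arity f) → HTerm Sg)
        (bs : Fin (Sg.arity f') → HTerm Sg),
        SubST S T (.app f as) → SubST S T (.app f' bs) →
        evC w0 (.app f as) = evC w0 (.app f' bs) →
        evC (gST S T w0) (.app f as) p = evC (gST S T w0) (.app f' bs) p := by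
      intro f f' as bs hsa hsb hc
      have : some f = some f' := congrFun hc ([] : List ℕ)
      have hff : f = f' := by injection this
      subst hff
      cases p with
      | nil => rfl
      | cons i p' =>
        show Cinterp f (fun j => evC (gST S T w0) (as j)) (i :: p')
          = Cinterp f (fun j => evC (gST S T w0) (bs j)) (i :: p')
        erw [Cinterp_cons, Cinterp_cons]
        by_cases hi : i < Sg.arity f
        · rw [dif_pos hi, dif_pos hi]
          apply ihn p' (by simp at hp; omega)
          · exact SubST_child hsa _
          · exact SubST_child hsb _
          · funext q
            have := congrFun hc (i :: q)
            show evC w0 (as ⟨i, hi⟩) q = evC w0 (bs ⟨i, hi⟩) q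
            rw [show evC w0 (.app f as) (i :: q)
                = if h : i < Sg.arity f then evC w0 (as ⟨i, h⟩) q else none from rfl,
              show evC w0 (.app f bs) (i :: q)
                = if h : i < Sg.arity f then evC w0 (bs ⟨i, h⟩) q else none from rfl,
              dif_pos hi, dif_pos hi] at this
            exact this
        · rw [dif_neg hi, dif_neg hi]
    cases a with
    | var v =>
      cases b with
      | var u =>
        have hveq : w0 v = w0 u := hc
        have hvm := SubST_var_mem ha
        have hum := SubST_var_mem hb
        by_cases hbv : BVp S T w0 v
        · have hbu : BVp S T w0 u := BVp_congr S T w0 hveq hbv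
          have e1 : evC (gST S T w0) (.var v) = evC (gST S T w0) (bch S T w0 hbv) := by
            rw [show evC (gST S T w0) (.var v) = gST S T w0 v from rfl, gST_eq,
              muST_bv S T w0 hvm hbv]
          have e2 : evC (gST S T w0) (.var u) = evC (gST S T w0) (bch S T w0 hbu) := by
            rw [show evC (gST S T w0) (.var u) = gST S T w0 u from rfl, gST_eq,
              muST_bv S T w0 hum hbu]
          rw [congrFun e1 p, congrFun e2 p]
          obtain ⟨hs1, hn1, he1⟩ := bch_spec S T w0 hbv
          obtain ⟨hs2, hn2, he2⟩ := bch_spec S T w0 hbu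
          obtain ⟨g1, cs1, h1⟩ : ∃ gg ccs, bch S T w0 hbv = HTerm.app gg ccs := by
            cases hx : bch S T w0 hbv with
            | var zz => exact absurd hx (hn1 _)
            | app gg ccs => exact ⟨gg, ccs, rfl⟩
          obtain ⟨g2, cs2, h2⟩ : ∃ gg ccs, bch S T w0 hbu = HTerm.app gg ccs := by
            cases hx : bch S T w0 hbu with
            | var zz => exact absurd hx (hn2 _)
            | app gg ccs => exact ⟨gg, ccs, rfl⟩
          rw [h1] at hs1 he1
          rw [h2] at hs2 he2
          rw [h1, h2]
          exact AA _ _ _ _ hs1 hs2 (by rw [he1, he2, hveq])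
        · have hbu : ¬ BVp S T w0 u := fun h => hbv (BVp_congr S T w0 hveq.symm h)
          show gST S T w0 v p = gST S T w0 u p
          rw [gST_rep S T w0 hvm hbv, gST_rep S T w0 hum hbu,
            repOf_eq S T w0 hvm hum hveq]
      | app f' bs =>
        have hvm := SubST_var_mem ha
        have hbv : BVp S T w0 v :=
          ⟨.app f' bs, hb, by intro u h; exact absurd h (by simp), hc.symm⟩
        have e1 : evC (gST S T w0) (.var v) = evC (gST S T w0) (bch S T w0 hbv) := by
          rw [show evC (gST S T w0) (.var v) = gST S T w0 v from rfl, gST_eq,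
            muST_bv S T w0 hvm hbv]
        rw [congrFun e1 p]
        obtain ⟨hs1, hn1, he1⟩ := bch_spec S T w0 hbv
        obtain ⟨g1, cs1, h1⟩ : ∃ gg ccs, bch S T w0 hbv = HTerm.app gg ccs := by
          cases hx : bch S T w0 hbv with
          | var zz => exact absurd hx (hn1 _)
          | app gg ccs => exact ⟨gg, ccs, rfl⟩
        rw [h1] at hs1 he1
        rw [h1]
        exact AA _ _ _ _ hs1 hb (by rw [he1]; exact hc)
    | app f as =>
      cases b with
      | var u =>
        have hum := SubST_var_mem hb
        have hbu : BVp S T w0 u :=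
          ⟨.app f as, ha, by intro z h; exact absurd h (by simp), hc⟩
        have e2 : evC (gST S T w0) (.var u) = evC (gST S T w0) (bch S T w0 hbu) := by
          rw [show evC (gST S T w0) (.var u) = gST S T w0 u from rfl, gST_eq,
            muST_bv S T w0 hum hbu]
        rw [congrFun e2 p]
        obtain ⟨hs2, hn2, he2⟩ := bch_spec S T w0 hbu
        obtain ⟨g2, cs2, h2⟩ : ∃ gg ccs, bch S T w0 hbu = HTerm.app gg ccs := by
          cases hx : bch S T w0 hbu with
          | var zz => exact absurd hx (hn2 _)
          | app gg ccs => exact ⟨gg, ccs, rfl⟩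
        rw [h2] at hs2 he2
        rw [h2]
        exact AA _ _ _ _ ha hs2 (by rw [he2]; exact hc)
      | app f' bs => exact AA _ _ _ _ ha hb hc

lemma gST_solves (hsol : evC w0 S = evC w0 T) :
    evC (gST S T w0) S = evC (gST S T w0) T := by
  funext p
  exact satST S T w0 hsol p.length p le_rfl S T (Or.inl (IsSub.refl S))
    (Or.inr (IsSub.refl T)) hsol

end Core

end AMGU
namespace AMGU

open HTerm
open scoped Classical

variable {Sg : Signature}

section Core

variable (S T : HTerm Sg) (w0 : ℕ → C Sg)

/-- finitely-valued variables are in the hvars of the solved form. -/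
lemma finW : ∀ k (v : ℕ), finC (w0 v) → {p : List ℕ | (w0 v p).isSome}.ncard ≤ k →
    v ∈ (muST S T w0).hvars := by
  intro k
  induction k using Nat.strong_induction_on with
  | _ k ih =>
    intro v hfin hcard
    by_cases hd : v ∈ (muST S T w0).dom
    · by_cases hvm : v ∈ VST S T
      · by_cases hb : BVp S T w0 v
        · -- bound to a non-variable witness
          obtain ⟨hs1, hn1, he1⟩ := bch_spec S T w0 hb
          apply hvars_of_map hd
          rw [muST_bv S T w0 hvm hb]
          intro u hu
          obtain ⟨q, hq⟩ := occ_exists hu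
          -- q ≠ []
          obtain ⟨g1, cs1, hbch⟩ : ∃ gg ccs, bch S T w0 hb = HTerm.app gg ccs := by
            cases hx : bch S T w0 hb with
            | var zz => exact absurd hx (hn1 _)
            | app gg ccs => exact ⟨gg, ccs, rfl⟩
          have hq0 : q ≠ [] := by
            intro h0
            subst h0
            rw [hbch] at hq
            simp [labelAt] at hq
          -- value of u is the q-subtree of the value of v
          have hval : ∀ p, w0 u p = w0 v (q ++ p) := by
            intro p
            rw [← congrFun he1 (q ++ p)]
            exact (evC_prefix hq w0 p).symm
          -- supports
          have hsupp : {p : List ℕ | (w0 u p).isSome} =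
              (fun p => q ++ p) ⁻¹' {p : List ℕ | (w0 v p).isSome} := by
            ext p
            simp only [Set.mem_setOf_eq, Set.mem_preimage]
            rw [hval p]
          have hinj : Function.Injective (fun p : List ℕ => q ++ p) :=
            fun p1 p2 h => List.append_cancel_left h
          have hufin : finC (w0 u) := by
            rw [finC, hsupp]
            exact Set.Finite.preimage hinj.injOn hfin
          -- the root is in the support of v but not in the image
          have hroot : ([] : List ℕ) ∈ {p : List ℕ | (w0 v p).isSome} := by
            simp only [Set.mem_setOf_eq]
            rw [← congrFun he1 []]
            rw [hbch]
            rfl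
          have himage : (fun p : List ℕ => q ++ p) '' {p | (w0 u p).isSome}
              ⊆ {p | (w0 v p).isSome} := by
            rintro r ⟨p, hp, rfl⟩
            simp only [Set.mem_setOf_eq] at hp ⊢
            rw [← hval p]
            exact hp
          have hneroot : ([] : List ℕ) ∉
              (fun p : List ℕ => q ++ p) '' {p | (w0 u p).isSome} := by
            rintro ⟨p, hp, hq2⟩
            cases q with
            | nil => exact hq0 rfl
            | cons a q => simp at hq2
          have hss : (fun p : List ℕ => q ++ p) '' {p | (w0 u p).isSome}
              ⊂ {p | (w0 v p).isSome} :=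
            ⟨himage, fun hsub => hneroot (hsub hroot)⟩
          have hlt := Set.ncard_lt_ncard hss hfin
          rw [Set.ncard_image_of_injective _ hinj] at hlt
          exact ih _ (by omega) u hufin (le_refl _)
        · -- alias binding
          apply hvars_of_map hd
          rw [muST_rep S T w0 hvm hb]
          by_cases hr : repOf S T w0 v = v
          · rw [if_pos hr]
            intro u hu
            have hu' : u = v := hu
            subst hu'
            exfalso
            apply hd
            have := muST_rep S T w0 hvm hb
            rw [if_pos hr] at this
            exact this
          · rw [if_neg hr]
            intro u hu
            have hu' : u = repOf S T w0 v := hu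
            subst hu'
            exact hvars_of_not_dom (rep_not_dom S T w0 hvm hb)
      · exfalso
        exact hd (muST_free S T w0 hvm)
    · exact hvars_of_not_dom hd

/-- the core unification lemma, modulo the finiteness of the starting
solution off the shared variables. -/
lemma core_unif (hsol : evC w0 S = evC w0 T)
    (hstar : ∀ z ∈ VST S T, z ∉ S.varsIn ∩ T.varsIn → finC (w0 z)) :
    ∃ g : ℕ → C Sg, evC g S = evC g T ∧
      ∀ z, z ∉ S.varsIn ∩ T.varsIn → finC (g z) := by
  refine ⟨gST S T w0, gST_solves S T w0 hsol, ?_⟩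
  intro z hz
  have hzh : z ∈ (muST S T w0).hvars := by
    by_cases hvm : z ∈ VST S T
    · have hfin := hstar z hvm hz
      exact finW S T w0 _ z hfin le_rfl
    · apply hvars_of_not_dom
      intro hd
      exact hd (muST_free S T w0 hvm)
  exact finC_canonC (muST_rsf S T w0) (fun _ => finC_none) z hzh

end Core

end AMGU
namespace AMGU

open HTerm
open scoped Classical

variable {Sg : Signature}

/-- number of occurrences of a variable in a term. -/
noncomputable def cnt (v : ℕ) : HTerm Sg → ℕ
  | .var y => if y = v then 1 else 0
  | .app _ ts => ∑ i, cnt v (ts i)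

/-- size of a term. -/
noncomputable def tsize : HTerm Sg → ℕ
  | .var _ => 1
  | .app _ ts => 1 + ∑ i, tsize (ts i)

lemma tsize_pos (t : HTerm Sg) : 1 ≤ tsize t := by
  cases t with
  | var y => exact le_refl _
  | app f ts => unfold tsize; omega

lemma cnt_pos_iff {v : ℕ} {t : HTerm Sg} : 1 ≤ cnt v t ↔ v ∈ t.varsIn := by
  induction t with
  | var y =>
    unfold cnt
    by_cases h : y = v
    · subst h; simp [varsIn]
    · simp [h, varsIn]
      exact fun hh => h hh.symm
  | app f ts ih =>
    unfold cnt
    constructor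
    · intro h
      have : ∃ i, 1 ≤ cnt v (ts i) := by
        by_contra hc
        push_neg at hc
        have : ∀ i, cnt v (ts i) = 0 := fun i => by have := hc i; omega
        rw [Finset.sum_congr rfl (fun i _ => this i)] at h
        simp at h
      obtain ⟨i, hi⟩ := this
      exact Set.mem_iUnion.mpr ⟨i, (ih i).mp hi⟩
    · intro h
      obtain ⟨i, hi⟩ := Set.mem_iUnion.mp h
      calc 1 ≤ cnt v (ts i) := (ih i).mpr hi
        _ ≤ ∑ j, cnt v (ts j) :=
          Finset.single_le_sum (f := fun j => cnt v (ts j))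
            (fun j _ => Nat.zero_le _) (Finset.mem_univ i)

lemma cnt_zero_iff {v : ℕ} {t : HTerm Sg} : cnt v t = 0 ↔ v ∉ t.varsIn := by
  rw [← cnt_pos_iff]; omega

/-- linearity in path form gives occurrence count at most one. -/
lemma cnt_le_one_of_linear {t : HTerm Sg}
    (h : ∀ (v : ℕ) (p q : List ℕ), t.labelAt p = some (Sum.inr v) →
      t.labelAt q = some (Sum.inr v) → p = q) (v : ℕ) : cnt v t ≤ 1 := by
  induction t with
  | var y => unfold cnt; split <;> omega
  | app f ts ih =>
    unfold cnt
    by_contra hc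
    push_neg at hc
    by_cases hex : ∃ i, 2 ≤ cnt v (ts i)
    · obtain ⟨i, hge⟩ := hex
      have hlin : ∀ (u : ℕ) (p q : List ℕ), (ts i).labelAt p = some (Sum.inr u) →
          (ts i).labelAt q = some (Sum.inr u) → p = q := by
        intro u p q hp hq
        have hp' : (HTerm.app f ts).labelAt (i.val :: p) = some (Sum.inr u) := by
          simp [labelAt, i.isLt]; exact hp
        have hq' : (HTerm.app f ts).labelAt (i.val :: q) = some (Sum.inr u) := by
          simp [labelAt, i.isLt]; exact hq
        have := h u _ _ hp' hq'
        simpa using this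
      have := ih i hlin
      omega
    · push_neg at hex
      have hall : ∀ i, cnt v (ts i) ≤ 1 := fun i => by have := hex i; omega
      have : ∃ i j : Fin (Sg.arity f), i ≠ j ∧ 1 ≤ cnt v (ts i) ∧ 1 ≤ cnt v (ts j) := by
        by_contra hcc
        push_neg at hcc
        by_cases he : ∃ i, 1 ≤ cnt v (ts i)
        · obtain ⟨i, hi⟩ := he
          have hz : ∀ j, j ≠ i → cnt v (ts j) = 0 := by
            intro j hj
            by_contra hh
            have h1 : 1 ≤ cnt v (ts j) := by omega
            have := hcc i j (fun hij => hj (hij.symm)) hi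
            omega
          have hsum : ∑ j, cnt v (ts j) = cnt v (ts i) := by
            apply Finset.sum_eq_single
            · intro j _ hj; exact hz j hj
            · intro hij; exact absurd (Finset.mem_univ i) hij
          have := hall i
          omega
        · push_neg at he
          have hz : ∀ i, cnt v (ts i) = 0 := fun i => by have := he i; omega
          have hsum : ∑ j, cnt v (ts j) = 0 :=
            Finset.sum_eq_zero (fun j _ => hz j)
          omega
      obtain ⟨i, j, hij, hi, hj⟩ := this
      obtain ⟨p, hp⟩ := occ_exists (cnt_pos_iff.mp hi)
      obtain ⟨q, hq⟩ := occ_exists (cnt_pos_iff.mp hj)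
      have hp' : (HTerm.app f ts).labelAt (i.val :: p) = some (Sum.inr v) := by
        simp [labelAt, i.isLt]; exact hp
      have hq' : (HTerm.app f ts).labelAt (j.val :: q) = some (Sum.inr v) := by
        simp [labelAt, j.isLt]; exact hq
      have := h v _ _ hp' hq'
      simp at this
      exact hij (Fin.ext this.1)

/-- single substitution. -/
noncomputable def subV (y : ℕ) (r : HTerm Sg) (t : HTerm Sg) : HTerm Sg :=
  t.substRaw (fun u => if u = y then r else .var u)

lemma subV_var_eq (y : ℕ) (r : HTerm Sg) : subV y r (.var y) = r := by
  unfold subV substRaw; simp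

lemma subV_var_ne (y : ℕ) (r : HTerm Sg) {u : ℕ} (h : u ≠ y) :
    subV y r (.var u) = .var u := by
  unfold subV substRaw; simp [h]

lemma subV_app (y : ℕ) (r : HTerm Sg) (f : Sg.Sym) (ts) :
    subV y r (.app f ts) = .app f (fun i => subV y r (ts i)) := rfl

lemma cnt_subV (y : ℕ) (r : HTerm Sg) (t : HTerm Sg) (v : ℕ) (hvy : v ≠ y) :
    cnt v (subV y r t) = cnt v t + cnt y t * cnt v r := by
  induction t with
  | var u =>
    by_cases h : u = y
    · subst h
      rw [subV_var_eq]
      unfold cnt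
      simp [Ne.symm hvy]
    · rw [subV_var_ne y r h]
      unfold cnt
      simp [h]
  | app f ts ih =>
    rw [subV_app]
    show (∑ i, cnt v (subV y r (ts i))) = (∑ i, cnt v (ts i)) + (∑ i, cnt y (ts i)) * cnt v r
    rw [Finset.sum_congr rfl (fun i _ => ih i), Finset.sum_add_distrib, Finset.sum_mul]

lemma cnt_subV_self (y : ℕ) (r : HTerm Sg) (t : HTerm Sg) :
    cnt y (subV y r t) = cnt y t * cnt y r := by
  induction t with
  | var u =>
    by_cases h : u = y
    · subst h
      rw [subV_var_eq]
      unfold cnt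
      simp
    · rw [subV_var_ne y r h]
      unfold cnt
      simp [h]
  | app f ts ih =>
    rw [subV_app]
    show (∑ i, cnt y (subV y r (ts i))) = (∑ i, cnt y (ts i)) * cnt y r
    rw [Finset.sum_congr rfl (fun i _ => ih i), Finset.sum_mul]

lemma subV_notmem (y : ℕ) (r : HTerm Sg) (t : HTerm Sg) (h : y ∉ t.varsIn) :
    subV y r t = t := by
  induction t with
  | var u =>
    have : u ≠ y := by
      intro hh; subst hh; exact h rfl
    exact subV_var_ne y r this
  | app f ts ih =>
    rw [subV_app]
    congr 1
    funext i
    exact ih i (fun hm => h (Set.mem_iUnion.mpr ⟨i, hm⟩))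

/-- evaluation of a substituted term. -/
lemma evC_subV (w : ℕ → C Sg) (y : ℕ) (r : HTerm Sg) (t : HTerm Sg) :
    evC w (subV y r t) = evC (Function.update w y (evC w r)) t := by
  induction t with
  | var u =>
    by_cases h : u = y
    · subst h
      rw [subV_var_eq]
      show evC w r = Function.update w u (evC w r) u
      rw [Function.update_self]
    · rw [subV_var_ne y r h]
      show w u = Function.update w y (evC w r) u
      rw [Function.update_of_ne h]
  | app f ts ih =>
    rw [subV_app]
    show Cinterp f (fun i => evC w (subV y r (ts i)))
      = Cinterp f (fun i => evC (Function.update w y (evC w r)) (ts i))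
    exact congrArg _ (funext fun i => ih i)

lemma evC_subV_fix {w : ℕ → C Sg} {y : ℕ} {r : HTerm Sg} (hw : w y = evC w r)
    (t : HTerm Sg) : evC w (subV y r t) = evC w t := by
  rw [evC_subV]
  have : Function.update w y (evC w r) = w := by
    funext u
    by_cases h : u = y
    · subst h; rw [Function.update_self, hw]
    · rw [Function.update_of_ne h]
  rw [this]

end AMGU
namespace AMGU

open HTerm
open scoped Classical

variable {Sg : Signature}

/-! ### Systems of equations -/

noncomputable def leftC (P : List (HTerm Sg × HTerm Sg)) (v : ℕ) : ℕ :=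
  (P.map (fun e => cnt v e.1)).sum

noncomputable def rightC (P : List (HTerm Sg × HTerm Sg)) (v : ℕ) : ℕ :=
  (P.map (fun e => cnt v e.2)).sum

noncomputable def sizeP (P : List (HTerm Sg × HTerm Sg)) : ℕ :=
  (P.map (fun e => tsize e.1 + tsize e.2)).sum

def varsP (P : List (HTerm Sg × HTerm Sg)) : Set ℕ :=
  {v | 1 ≤ leftC P v ∨ 1 ≤ rightC P v}

def SHP (P : List (HTerm Sg × HTerm Sg)) : Set ℕ :=
  {v | 1 ≤ leftC P v ∧ 1 ≤ rightC P v}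

def SolvedBy (w : ℕ → C Sg) (P : List (HTerm Sg × HTerm Sg)) : Prop :=
  ∀ e ∈ P, evC w e.1 = evC w e.2

lemma leftC_cons (e : HTerm Sg × HTerm Sg) (Q) (v : ℕ) :
    leftC (e :: Q) v = cnt v e.1 + leftC Q v := by
  simp [leftC]

lemma rightC_cons (e : HTerm Sg × HTerm Sg) (Q) (v : ℕ) :
    rightC (e :: Q) v = cnt v e.2 + rightC Q v := by
  simp [rightC]

lemma sizeP_cons (e : HTerm Sg × HTerm Sg) (Q) :
    sizeP (e :: Q) = tsize e.1 + tsize e.2 + sizeP Q := by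
  simp [sizeP]


lemma leftC_cons' (a b : HTerm Sg) (Q) (v : ℕ) :
    leftC ((a, b) :: Q) v = cnt v a + leftC Q v := by rw [leftC_cons]

lemma rightC_cons' (a b : HTerm Sg) (Q) (v : ℕ) :
    rightC ((a, b) :: Q) v = cnt v b + rightC Q v := by rw [rightC_cons]

lemma sizeP_cons' (a b : HTerm Sg) (Q) :
    sizeP ((a, b) :: Q) = tsize a + tsize b + sizeP Q := by rw [sizeP_cons]

lemma leftC_pos {P : List (HTerm Sg × HTerm Sg)} {v : ℕ} :
    1 ≤ leftC P v ↔ ∃ e ∈ P, v ∈ e.1.varsIn := by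
  induction P with
  | nil => simp [leftC]
  | cons e Q ih =>
    rw [leftC_cons]
    constructor
    · intro h
      rcases Nat.lt_or_ge (cnt v e.1) 1 with h1 | h1
      · have : 1 ≤ leftC Q v := by omega
        obtain ⟨e', he1, he2⟩ := ih.mp this
        exact ⟨e', List.mem_cons_of_mem _ he1, he2⟩
      · exact ⟨e, List.mem_cons_self, cnt_pos_iff.mp h1⟩
    · rintro ⟨e', he1, he2⟩
      rcases List.mem_cons.mp he1 with rfl | he1
      · have := cnt_pos_iff.mpr he2
        omega
      · have := ih.mpr ⟨e', he1, he2⟩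
        omega

lemma rightC_pos {P : List (HTerm Sg × HTerm Sg)} {v : ℕ} :
    1 ≤ rightC P v ↔ ∃ e ∈ P, v ∈ e.2.varsIn := by
  induction P with
  | nil => simp [rightC]
  | cons e Q ih =>
    rw [rightC_cons]
    constructor
    · intro h
      rcases Nat.lt_or_ge (cnt v e.2) 1 with h1 | h1
      · have : 1 ≤ rightC Q v := by omega
        obtain ⟨e', he1, he2⟩ := ih.mp this
        exact ⟨e', List.mem_cons_of_mem _ he1, he2⟩
      · exact ⟨e, List.mem_cons_self, cnt_pos_iff.mp h1⟩
    · rintro ⟨e', he1, he2⟩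
      rcases List.mem_cons.mp he1 with rfl | he1
      · have := cnt_pos_iff.mpr he2
        omega
      · have := ih.mpr ⟨e', he1, he2⟩
        omega

lemma varsP_finite (P : List (HTerm Sg × HTerm Sg)) : (varsP P).Finite := by
  have hsub : varsP P ⊆ ⋃ e ∈ P, (e.1.varsIn ∪ e.2.varsIn) := by
    intro v hv
    rcases hv with h | h
    · obtain ⟨e, he1, he2⟩ := leftC_pos.mp h
      exact Set.mem_biUnion he1 (Or.inl he2)
    · obtain ⟨e, he1, he2⟩ := rightC_pos.mp h
      exact Set.mem_biUnion he1 (Or.inr he2)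
  exact Set.Finite.subset (Set.Finite.biUnion (List.finite_toSet P)
    (fun e _ => (varsIn_finite e.1).union (varsIn_finite e.2))) hsub

/-- counts after substitution into the left components. -/
lemma leftC_mapL (y : ℕ) (r : HTerm Sg) (Q : List (HTerm Sg × HTerm Sg)) (v : ℕ)
    (hvy : v ≠ y) :
    leftC (Q.map (fun e => (subV y r e.1, e.2))) v = leftC Q v + leftC Q y * cnt v r := by
  induction Q with
  | nil => simp [leftC]
  | cons e Q ih =>
    simp only [List.map_cons]
    rw [leftC_cons, leftC_cons, leftC_cons, ih]
    show cnt v (subV y r e.1) + _ = _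
    rw [cnt_subV y r e.1 v hvy]
    ring

lemma leftC_mapL_self (y : ℕ) (r : HTerm Sg) (Q : List (HTerm Sg × HTerm Sg)) :
    leftC (Q.map (fun e => (subV y r e.1, e.2))) y = leftC Q y * cnt y r := by
  induction Q with
  | nil => simp [leftC]
  | cons e Q ih =>
    simp only [List.map_cons]
    rw [leftC_cons, leftC_cons, ih]
    show cnt y (subV y r e.1) + _ = _
    rw [cnt_subV_self y r e.1]
    ring

lemma rightC_mapL (y : ℕ) (r : HTerm Sg) (Q : List (HTerm Sg × HTerm Sg)) (v : ℕ) :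
    rightC (Q.map (fun e => (subV y r e.1, e.2))) v = rightC Q v := by
  induction Q with
  | nil => simp [rightC]
  | cons e Q ih =>
    simp only [List.map_cons]
    rw [rightC_cons, rightC_cons, ih]

lemma rightC_mapR (y : ℕ) (r : HTerm Sg) (Q : List (HTerm Sg × HTerm Sg)) (v : ℕ)
    (hvy : v ≠ y) :
    rightC (Q.map (fun e => (e.1, subV y r e.2))) v = rightC Q v + rightC Q y * cnt v r := by
  induction Q with
  | nil => simp [rightC]
  | cons e Q ih =>
    simp only [List.map_cons]
    rw [rightC_cons, rightC_cons, rightC_cons, ih]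
    show cnt v (subV y r e.2) + _ = _
    rw [cnt_subV y r e.2 v hvy]
    ring

lemma rightC_mapR_self (y : ℕ) (r : HTerm Sg) (Q : List (HTerm Sg × HTerm Sg)) :
    rightC (Q.map (fun e => (e.1, subV y r e.2))) y = rightC Q y * cnt y r := by
  induction Q with
  | nil => simp [rightC]
  | cons e Q ih =>
    simp only [List.map_cons]
    rw [rightC_cons, rightC_cons, ih]
    show cnt y (subV y r e.2) + _ = _
    rw [cnt_subV_self y r e.2]
    ring

lemma leftC_mapR (y : ℕ) (r : HTerm Sg) (Q : List (HTerm Sg × HTerm Sg)) (v : ℕ) :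
    leftC (Q.map (fun e => (e.1, subV y r e.2))) v = leftC Q v := by
  induction Q with
  | nil => simp [leftC]
  | cons e Q ih =>
    simp only [List.map_cons]
    rw [leftC_cons, leftC_cons, ih]

/-- counts over appended decompositions. -/
lemma leftC_append (P1 P2 : List (HTerm Sg × HTerm Sg)) (v : ℕ) :
    leftC (P1 ++ P2) v = leftC P1 v + leftC P2 v := by
  simp [leftC]

lemma rightC_append (P1 P2 : List (HTerm Sg × HTerm Sg)) (v : ℕ) :
    rightC (P1 ++ P2) v = rightC P1 v + rightC P2 v := by
  simp [rightC]

lemma sizeP_append (P1 P2 : List (HTerm Sg × HTerm Sg)) :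
    sizeP (P1 ++ P2) = sizeP P1 + sizeP P2 := by
  simp [sizeP]

lemma leftC_ofFn {n : ℕ} (as bs : Fin n → HTerm Sg) (v : ℕ) :
    leftC (List.ofFn (fun i => (as i, bs i))) v = ∑ i, cnt v (as i) := by
  simp [leftC, List.map_ofFn]
  rw [List.sum_ofFn]
  rfl

lemma rightC_ofFn {n : ℕ} (as bs : Fin n → HTerm Sg) (v : ℕ) :
    rightC (List.ofFn (fun i => (as i, bs i))) v = ∑ i, cnt v (bs i) := by
  simp [rightC, List.map_ofFn]
  rw [List.sum_ofFn]
  rfl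

lemma sizeP_ofFn {n : ℕ} (as bs : Fin n → HTerm Sg) :
    sizeP (List.ofFn (fun i => (as i, bs i))) = ∑ i, (tsize (as i) + tsize (bs i)) := by
  simp [sizeP, List.map_ofFn]
  rw [List.sum_ofFn]
  rfl

/-- ncard decrease helper. -/
lemma ncard_decrease {A B : Set ℕ} {y : ℕ} (hB : B.Finite) (hy : y ∈ B)
    (hsub : A ⊆ B \ {y}) : A.ncard < B.ncard := by
  calc A.ncard ≤ (B \ {y}).ncard := Set.ncard_le_ncard hsub hB.diff
    _ < B.ncard := Set.ncard_diff_singleton_lt_of_mem hy hB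

lemma singleSubst_map_self {x : ℕ} {t : HTerm Sg} : (singleSubst x t).map x = t := by
  show (if x = x then t else _) = t
  rw [if_pos rfl]

lemma singleSubst_map_other {x : ℕ} {t : HTerm Sg} {u : ℕ} (h : u ≠ x) :
    (singleSubst x t).map u = .var u := by
  show (if u = x then t else _) = _
  rw [if_neg h]

lemma singleSubst_not_dom {x : ℕ} {t : HTerm Sg} {u : ℕ} (h : u ≠ x) :
    u ∉ (singleSubst x t).dom := fun hd => hd (singleSubst_map_other h)

/-- singleSubst is in rational solved form. -/
lemma singleSubst_rsf (x : ℕ) (t : HTerm Sg) : (singleSubst x t).InRSF := by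
  intro Q hQ hcirc
  obtain ⟨n, hn, xf, hinj, hQeq⟩ := hcirc
  have h0 : (xf 0, HTerm.var (xf ((0+1) % n))) ∈ Q := by
    rw [hQeq]; exact ⟨0, by omega, rfl⟩
  have h1 : (xf 1, HTerm.var (xf ((1+1) % n))) ∈ Q := by
    rw [hQeq]; exact ⟨1, by omega, rfl⟩
  obtain ⟨hd0, -⟩ := hQ h0
  obtain ⟨hd1, -⟩ := hQ h1
  have hx0 : xf 0 = x := by
    by_contra h
    exact (singleSubst_not_dom h) hd0
  have hx1 : xf 1 = x := by
    by_contra h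
    exact (singleSubst_not_dom h) hd1
  have := hinj 0 1 (by omega) (by omega) (hx0.trans hx1.symm)
  omega

end AMGU
namespace AMGU

open HTerm
open scoped Classical

variable {Sg : Signature}

lemma evC_update_not_mem {g : ℕ → C Sg} {y : ℕ} {c : C Sg} {t : HTerm Sg}
    (h : y ∉ t.varsIn) : evC (Function.update g y c) t = evC g t :=
  evC_congr (fun z hz => Function.update_of_ne (fun he => h (by rw [← he]; exact hz)) _ _)

lemma cnt_left_le {e : HTerm Sg × HTerm Sg} {Q : List (HTerm Sg × HTerm Sg)}
    (he : e ∈ Q) (v : ℕ) : cnt v e.1 ≤ leftC Q v := by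
  induction Q with
  | nil => cases he
  | cons e' Q ih =>
    rw [leftC_cons]
    rcases List.mem_cons.mp he with rfl | he
    · omega
    · have := ih he; omega

lemma cnt_right_le {e : HTerm Sg × HTerm Sg} {Q : List (HTerm Sg × HTerm Sg)}
    (he : e ∈ Q) (v : ℕ) : cnt v e.2 ≤ rightC Q v := by
  induction Q with
  | nil => cases he
  | cons e' Q ih =>
    rw [rightC_cons]
    rcases List.mem_cons.mp he with rfl | he
    · omega
    · have := ih he; omega

set_option maxHeartbeats 2000000 in
/-- The big system lemma: a solvable system whose right-hand sides are
globally linear and whose両-sided variables occur at most once on the left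
has a solution which is finite outside the both-sided variables. -/
theorem SYS : ∀ (n1 : ℕ) (n2 : ℕ) (P : List (HTerm Sg × HTerm Sg)),
    (varsP P).ncard ≤ n1 → sizeP P ≤ n2 →
    (∀ v, rightC P v ≤ 1) →
    (∀ v, 1 ≤ rightC P v → leftC P v ≤ 1) →
    (∃ w0 : ℕ → C Sg, SolvedBy w0 P) →
    ∃ g : ℕ → C Sg, SolvedBy g P ∧ ∀ z ∉ SHP P, finC (g z) := by
  intro n1
  induction n1 using Nat.strong_induction_on with
  | _ n1 ih1 =>
  intro n2
  induction n2 using Nat.strong_induction_on with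
  | _ n2 ih2 =>
  intro P hn1 hn2 hI1 hI2 hsolv
  obtain ⟨w0, hw0⟩ := hsolv
  rcases P with _ | ⟨⟨a, b⟩, Q⟩
  · exact ⟨fun _ _ => none, by rintro e ⟨⟩, fun z _ => finC_none⟩
  -- general facts
  have hw0ab : evC w0 a = evC w0 b := hw0 (a, b) (List.mem_cons_self)
  have hw0Q : SolvedBy w0 Q := fun e he => hw0 e (List.mem_cons_of_mem _ he)
  have hsizeQ : sizeP Q + 2 ≤ sizeP ((a, b) :: Q) := by
    rw [sizeP_cons']
    have := tsize_pos a
    have := tsize_pos b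
    omega
  have hQsub : varsP Q ⊆ varsP ((a, b) :: Q) := by
    intro v hv
    rcases hv with h | h
    · left; rw [leftC_cons']; omega
    · right; rw [rightC_cons']; omega
  have hSHsub : SHP Q ⊆ SHP ((a, b) :: Q) := by
    intro v ⟨h1, h2⟩
    constructor
    · rw [leftC_cons']; omega
    · rw [rightC_cons']; omega
  have hI1Q : ∀ v, rightC Q v ≤ 1 := by
    intro v
    have := hI1 v
    rw [rightC_cons'] at this
    omega
  have hI2Q : ∀ v, 1 ≤ rightC Q v → leftC Q v ≤ 1 := by
    intro v hv
    have h1 := hI2 v (by rw [rightC_cons']; omega)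
    rw [leftC_cons'] at h1
    omega
  by_cases hab : a = b
  · -- drop a trivial pair
    subst hab
    have hn2' : tsize a + tsize a + sizeP Q ≤ n2 := by
      rw [sizeP_cons'] at hn2; exact hn2
    obtain ⟨g, hg1, hg2⟩ := ih2 (sizeP Q)
      (by have := tsize_pos a; omega) Q
      (le_trans (Set.ncard_le_ncard hQsub (varsP_finite _)) hn1) le_rfl
      hI1Q hI2Q ⟨w0, hw0Q⟩
    refine ⟨g, ?_, ?_⟩
    · intro e he
      rcases List.mem_cons.mp he with rfl | he
      · rfl
      · exact hg1 e he
    · intro z hz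
      exact hg2 z (fun hm => hz (hSHsub hm))
  cases a with
  | var y =>
    have hcya : cnt y (HTerm.var y : HTerm Sg) = 1 := by unfold cnt; simp
    by_cases hyb : y ∈ b.varsIn
    · -- bind y to b (rational binding, y may occur in b)
      have hbny : b ≠ .var y := fun h => hab (by rw [h])
      have hrb : 1 ≤ cnt y b := cnt_pos_iff.mpr hyb
      have hrP : 1 ≤ rightC ((HTerm.var y, b) :: Q) y := by
        rw [rightC_cons']; omega
      have hlP := hI2 y hrP
      rw [leftC_cons'] at hlP
      have hQl : leftC Q y = 0 := by omega
      have hQr : rightC Q y = 0 := by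
        have := hI1 y
        rw [rightC_cons'] at this
        omega
      have hyP : y ∈ varsP ((HTerm.var y, b) :: Q) := Or.inr hrP
      have hymem : y ∉ varsP Q := by
        intro h
        rcases h with h | h
        · omega
        · omega
      have hlt : (varsP Q).ncard < (varsP ((HTerm.var y, b) :: Q)).ncard :=
        ncard_decrease (varsP_finite _) hyP
          (fun v hv => ⟨hQsub hv, fun he => hymem (he ▸ hv)⟩)
      obtain ⟨g', hg'1, hg'2⟩ := ih1 ((varsP Q).ncard) (by omega) (sizeP Q) Q
        le_rfl le_rfl hI1Q hI2Q ⟨w0, hw0Q⟩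
      set ν := singleSubst y b with hν
      have hνR := singleSubst_rsf y b
      set g : ℕ → C Sg := canonC hνR g' with hg
      have hdom : y ∈ ν.dom := by
        show ν.map y ≠ .var y
        rw [singleSubst_map_self]
        exact hbny
      have hgy : g y = evC g b := by
        have := canonC_sat hνR g' _ ⟨y, hdom, rfl⟩
        rw [singleSubst_map_self] at this
        exact this
      have hgoff : ∀ z, z ≠ y → g z = g' z := by
        intro z hz
        exact canonC_agree hνR g' (singleSubst_not_dom hz)
      have hQfree : ∀ e ∈ Q, y ∉ e.1.varsIn ∧ y ∉ e.2.varsIn := by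
        intro e he
        constructor
        · intro hm
          have := cnt_left_le he y
          have := cnt_pos_iff.mpr hm
          omega
        · intro hm
          have := cnt_right_le he y
          have := cnt_pos_iff.mpr hm
          omega
      refine ⟨g, ?_, ?_⟩
      · intro e he
        rcases List.mem_cons.mp he with rfl | he
        · exact hgy
        · obtain ⟨h1, h2⟩ := hQfree e he
          rw [evC_congr (t := e.1) (fun z hz => hgoff z (fun hzy => h1 (hzy ▸ hz))),
            evC_congr (t := e.2) (fun z hz => hgoff z (fun hzy => h2 (hzy ▸ hz)))]
          exact hg'1 e he
      · intro z hz
        have hzy : z ≠ y := by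
          intro h
          subst h
          apply hz
          refine ⟨?_, hrP⟩
          rw [leftC_cons']
          have h5 : cnt z (HTerm.var z : HTerm Sg) = 1 := by unfold cnt; simp
          omega
        rw [hgoff z hzy]
        exact hg'2 z (fun hm => hz (hSHsub hm))
    · -- y not in b
      have hcyb : cnt y b = 0 := cnt_zero_iff.mpr hyb
      by_cases hrQ : 1 ≤ rightC Q y
      · -- y is shared: substitute into the rights
        have hrPy : 1 ≤ rightC ((HTerm.var y, b) :: Q) y := by rw [rightC_cons']; omega
        have hlPy := hI2 y hrPy
        rw [leftC_cons'] at hlPy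
        have hQl : leftC Q y = 0 := by omega
        have hrQ1 : rightC Q y = 1 := by
          have := hI1 y; rw [rightC_cons'] at this; omega
        have hcl : ∀ v, leftC (Q.map (fun e => (e.1, subV y b e.2))) v = leftC Q v :=
          fun v => leftC_mapR y b Q v
        have hcrn : ∀ v, v ≠ y →
            rightC (Q.map (fun e => (e.1, subV y b e.2))) v = rightC Q v + cnt v b := by
          intro v hv
          rw [rightC_mapR y b Q v hv, hrQ1, one_mul]
        have hcry : rightC (Q.map (fun e => (e.1, subV y b e.2))) y = 0 := by
          rw [rightC_mapR_self y b Q, hcyb, Nat.mul_zero]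
        have hI1' : ∀ v, rightC (Q.map (fun e => (e.1, subV y b e.2))) v ≤ 1 := by
          intro v
          by_cases hv : v = y
          · subst hv; omega
          · rw [hcrn v hv]
            have := hI1 v; rw [rightC_cons'] at this; omega
        have hI2' : ∀ v, 1 ≤ rightC (Q.map (fun e => (e.1, subV y b e.2))) v →
            leftC (Q.map (fun e => (e.1, subV y b e.2))) v ≤ 1 := by
          intro v hv
          by_cases hvy : v = y
          · subst hvy; omega
          · rw [hcl]
            rw [hcrn v hvy] at hv
            have h2 := hI2 v (by rw [rightC_cons']; omega)
            rw [leftC_cons'] at h2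
            omega
        have hw0y : w0 y = evC w0 b := hw0ab
        have hsol' : SolvedBy w0 (Q.map (fun e => (e.1, subV y b e.2))) := by
          rintro e' he'
          obtain ⟨e, he, rfl⟩ := List.mem_map.mp he'
          show evC w0 e.1 = evC w0 (subV y b e.2)
          rw [evC_subV_fix hw0y]
          exact hw0Q e he
        have hyP : y ∈ varsP ((HTerm.var y, b) :: Q) := Or.inr hrPy
        have hsubV : varsP (Q.map (fun e => (e.1, subV y b e.2)))
            ⊆ varsP ((HTerm.var y, b) :: Q) \ {y} := by
          intro v hv
          have hvy : v ≠ y := by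
            intro h; subst h
            rcases hv with h | h
            · rw [hcl] at h; omega
            · omega
          refine ⟨?_, hvy⟩
          rcases hv with h | h
          · rw [hcl] at h; left; rw [leftC_cons']; omega
          · rw [hcrn v hvy] at h
            right; rw [rightC_cons']
            omega
        have hlt := ncard_decrease (varsP_finite _) hyP hsubV
        obtain ⟨g', hg'1, hg'2⟩ := ih1 ((varsP (Q.map (fun e => (e.1, subV y b e.2)))).ncard)
          (by omega) (sizeP (Q.map (fun e => (e.1, subV y b e.2))))
          (Q.map (fun e => (e.1, subV y b e.2))) le_rfl le_rfl hI1' hI2' ⟨w0, hsol'⟩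
        refine ⟨Function.update g' y (evC g' b), ?_, ?_⟩
        · intro e he
          rcases List.mem_cons.mp he with rfl | he
          · show Function.update g' y (evC g' b) y = evC (Function.update g' y (evC g' b)) b
            rw [Function.update_self, evC_update_not_mem hyb]
          · have hlfree : y ∉ e.1.varsIn := by
              intro hm
              have := cnt_left_le he y
              have := cnt_pos_iff.mpr hm
              omega
            have h1 : evC (Function.update g' y (evC g' b)) e.1 = evC g' e.1 :=
              evC_update_not_mem hlfree
            have h2 := hg'1 (e.1, subV y b e.2) (List.mem_map.mpr ⟨e, he, rfl⟩)
            show evC (Function.update g' y (evC g' b)) e.1 = _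
            rw [h1, h2, evC_subV]
        · intro z hz
          have hzy : z ≠ y := by
            intro h; subst h
            apply hz
            refine ⟨?_, hrPy⟩
            rw [leftC_cons']
            have h5 : cnt z (HTerm.var z : HTerm Sg) = 1 := by unfold cnt; simp
            omega
          rw [Function.update_of_ne hzy]
          apply hg'2
          intro hm
          apply hz
          obtain ⟨hm1, hm2⟩ := hm
          constructor
          · rw [hcl] at hm1; rw [leftC_cons']; omega
          · rw [hcrn z hzy] at hm2
            rw [rightC_cons']
            omega
      · -- y is not shared: substitute into the lefts
        have hrQ0 : rightC Q y = 0 := by omega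
        have hcr : ∀ v, rightC (Q.map (fun e => (subV y b e.1, e.2))) v = rightC Q v :=
          fun v => rightC_mapL y b Q v
        have hcln : ∀ v, v ≠ y → leftC (Q.map (fun e => (subV y b e.1, e.2))) v
            = leftC Q v + leftC Q y * cnt v b :=
          fun v hv => leftC_mapL y b Q v hv
        have hcly : leftC (Q.map (fun e => (subV y b e.1, e.2))) y = 0 := by
          rw [leftC_mapL_self y b Q, hcyb, Nat.mul_zero]
        have hI1' : ∀ v, rightC (Q.map (fun e => (subV y b e.1, e.2))) v ≤ 1 := by
          intro v
          rw [hcr]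
          exact hI1Q v
        have hI2' : ∀ v, 1 ≤ rightC (Q.map (fun e => (subV y b e.1, e.2))) v →
            leftC (Q.map (fun e => (subV y b e.1, e.2))) v ≤ 1 := by
          intro v hv
          rw [hcr] at hv
          have hvy : v ≠ y := by
            intro h; subst h; omega
          have hb0 : cnt v b = 0 := by
            have := hI1 v
            rw [rightC_cons'] at this
            omega
          rw [hcln v hvy, hb0, Nat.mul_zero, Nat.add_zero]
          have h2 := hI2 v (by rw [rightC_cons']; omega)
          rw [leftC_cons'] at h2
          omega
        have hw0y : w0 y = evC w0 b := hw0ab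
        have hsol' : SolvedBy w0 (Q.map (fun e => (subV y b e.1, e.2))) := by
          rintro e' he'
          obtain ⟨e, he, rfl⟩ := List.mem_map.mp he'
          show evC w0 (subV y b e.1) = evC w0 e.2
          rw [evC_subV_fix hw0y]
          exact hw0Q e he
        have hyP : y ∈ varsP ((HTerm.var y, b) :: Q) := by
          left; rw [leftC_cons']; omega
        have hsubV : varsP (Q.map (fun e => (subV y b e.1, e.2)))
            ⊆ varsP ((HTerm.var y, b) :: Q) \ {y} := by
          intro v hv
          have hvy : v ≠ y := by
            intro h; subst h
            rcases hv with h | h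
            · omega
            · rw [hcr] at h; omega
          refine ⟨?_, hvy⟩
          rcases hv with h | h
          · rw [hcln v hvy] at h
            rcases Nat.lt_or_ge (leftC Q v) 1 with h1 | h1
            · have hb1 : 1 ≤ cnt v b := by
                rcases Nat.lt_or_ge (cnt v b) 1 with h2 | h2
                · exfalso; have : leftC Q y * cnt v b = 0 := by
                    rw [show cnt v b = 0 by omega, Nat.mul_zero]
                  omega
                · exact h2
              right; rw [rightC_cons']; omega
            · left; rw [leftC_cons']; omega
          · rw [hcr] at h; right; rw [rightC_cons']; omega
        have hlt := ncard_decrease (varsP_finite _) hyP hsubV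
        obtain ⟨g', hg'1, hg'2⟩ := ih1 ((varsP (Q.map (fun e => (subV y b e.1, e.2)))).ncard)
          (by omega) (sizeP (Q.map (fun e => (subV y b e.1, e.2))))
          (Q.map (fun e => (subV y b e.1, e.2))) le_rfl le_rfl hI1' hI2' ⟨w0, hsol'⟩
        refine ⟨Function.update g' y (evC g' b), ?_, ?_⟩
        · intro e he
          rcases List.mem_cons.mp he with rfl | he
          · show Function.update g' y (evC g' b) y = evC (Function.update g' y (evC g' b)) b
            rw [Function.update_self, evC_update_not_mem hyb]
          · have hrfree : y ∉ e.2.varsIn := by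
              intro hm
              have := cnt_right_le he y
              have := cnt_pos_iff.mpr hm
              omega
            have h2 := hg'1 (subV y b e.1, e.2) (List.mem_map.mpr ⟨e, he, rfl⟩)
            show evC (Function.update g' y (evC g' b)) e.1 = _
            rw [← evC_subV, h2, evC_update_not_mem hrfree]
        · intro z hz
          by_cases hzy : z = y
          · subst hzy
            rw [Function.update_self]
            apply finC_evC
            intro v hv
            have hb1 : 1 ≤ cnt v b := cnt_pos_iff.mpr hv
            have hr0 : rightC Q v = 0 := by
              have := hI1 v
              rw [rightC_cons'] at this
              omega
            apply hg'2
            intro hm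
            obtain ⟨-, hm2⟩ := hm
            rw [hcr] at hm2
            omega
          · rw [Function.update_of_ne hzy]
            apply hg'2
            intro hm
            apply hz
            obtain ⟨hm1, hm2⟩ := hm
            rw [hcr] at hm2
            rw [hcln z hzy] at hm1
            constructor
            · rw [leftC_cons']
              rcases Nat.lt_or_ge (leftC Q z) 1 with h1 | h1
              · exfalso
                have hb1 : 1 ≤ cnt z b := by
                  rcases Nat.lt_or_ge (cnt z b) 1 with h2 | h2
                  · have : leftC Q y * cnt z b = 0 := by
                      rw [show cnt z b = 0 by omega, Nat.mul_zero]
                    omega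
                  · exact h2
                have := hI1 z
                rw [rightC_cons'] at this
                omega
              · omega
            · rw [rightC_cons']; omega
  | app f as =>
    cases b with
    | var u =>
      have hcua : cnt u (HTerm.var u : HTerm Sg) = 1 := by unfold cnt; simp
      have hrPu : 1 ≤ rightC ((HTerm.app f as, HTerm.var u) :: Q) u := by
        rw [rightC_cons']; omega
      have hrQ0 : rightC Q u = 0 := by
        have := hI1 u; rw [rightC_cons'] at this; omega
      have hlPu := hI2 u hrPu
      rw [leftC_cons'] at hlPu
      by_cases hua : u ∈ (HTerm.app f as).varsIn
      · -- bind u to the left side (rational binding)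
        have hca1 : 1 ≤ cnt u (HTerm.app f as) := cnt_pos_iff.mpr hua
        have hQl : leftC Q u = 0 := by omega
        have huP : u ∈ varsP ((HTerm.app f as, HTerm.var u) :: Q) := Or.inr hrPu
        have humem : u ∉ varsP Q := by
          intro h
          rcases h with h | h
          · omega
          · omega
        have hlt : (varsP Q).ncard < (varsP ((HTerm.app f as, HTerm.var u) :: Q)).ncard :=
          ncard_decrease (varsP_finite _) huP
            (fun v hv => ⟨hQsub hv, fun he => humem (he ▸ hv)⟩)
        obtain ⟨g', hg'1, hg'2⟩ := ih1 ((varsP Q).ncard) (by omega) (sizeP Q) Q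
          le_rfl le_rfl hI1Q hI2Q ⟨w0, hw0Q⟩
        have hνR := singleSubst_rsf u (HTerm.app f as)
        have hdom : u ∈ (singleSubst u (HTerm.app f as)).dom := by
          show (singleSubst u (HTerm.app f as)).map u ≠ .var u
          rw [singleSubst_map_self]
          intro h
          exact absurd h (by simp)
        have hgy : canonC hνR g' u = evC (canonC hνR g') (HTerm.app f as) := by
          have := canonC_sat hνR g' _ ⟨u, hdom, rfl⟩
          rw [singleSubst_map_self] at this
          exact this
        have hgoff : ∀ z, z ≠ u → canonC hνR g' z = g' z := by
          intro z hz
          exact canonC_agree hνR g' (singleSubst_not_dom hz)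
        have hQfree : ∀ e ∈ Q, u ∉ e.1.varsIn ∧ u ∉ e.2.varsIn := by
          intro e he
          constructor
          · intro hm
            have := cnt_left_le he u
            have := cnt_pos_iff.mpr hm
            omega
          · intro hm
            have := cnt_right_le he u
            have := cnt_pos_iff.mpr hm
            omega
        refine ⟨canonC hνR g', ?_, ?_⟩
        · intro e he
          rcases List.mem_cons.mp he with rfl | he
          · exact hgy.symm
          · obtain ⟨h1, h2⟩ := hQfree e he
            rw [evC_congr (t := e.1) (fun z hz => hgoff z (fun hzy => h1 (hzy ▸ hz))),
              evC_congr (t := e.2) (fun z hz => hgoff z (fun hzy => h2 (hzy ▸ hz)))]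
            exact hg'1 e he
        · intro z hz
          have hzu : z ≠ u := by
            intro h
            subst h
            apply hz
            refine ⟨?_, hrPu⟩
            rw [leftC_cons']
            omega
          rw [hgoff z hzu]
          exact hg'2 z (fun hm => hz (hSHsub hm))
      · have hca0 : cnt u (HTerm.app f as) = 0 := cnt_zero_iff.mpr hua
        by_cases hlQ : 1 ≤ leftC Q u
        · -- u is shared: substitute the left side into the lefts
          have hlQ1 : leftC Q u = 1 := by omega
          have hcr : ∀ v, rightC (Q.map (fun e => (subV u (HTerm.app f as) e.1, e.2))) v
              = rightC Q v := fun v => rightC_mapL u (HTerm.app f as) Q v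
          have hcln : ∀ v, v ≠ u →
              leftC (Q.map (fun e => (subV u (HTerm.app f as) e.1, e.2))) v
              = leftC Q v + cnt v (HTerm.app f as) := by
            intro v hv
            rw [leftC_mapL u (HTerm.app f as) Q v hv, hlQ1, one_mul]
          have hclu : leftC (Q.map (fun e => (subV u (HTerm.app f as) e.1, e.2))) u = 0 := by
            rw [leftC_mapL_self u (HTerm.app f as) Q, hca0, Nat.mul_zero]
          have hI1' : ∀ v, rightC (Q.map (fun e => (subV u (HTerm.app f as) e.1, e.2))) v ≤ 1 := by
            intro v
            rw [hcr]
            exact hI1Q v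
          have hI2' : ∀ v, 1 ≤ rightC (Q.map (fun e => (subV u (HTerm.app f as) e.1, e.2))) v →
              leftC (Q.map (fun e => (subV u (HTerm.app f as) e.1, e.2))) v ≤ 1 := by
            intro v hv
            rw [hcr] at hv
            have hvu : v ≠ u := by
              intro h; subst h; omega
            rw [hcln v hvu]
            have h2 := hI2 v (by rw [rightC_cons']; omega)
            rw [leftC_cons'] at h2
            omega
          have hw0u : w0 u = evC w0 (HTerm.app f as) := hw0ab.symm
          have hsol' : SolvedBy w0 (Q.map (fun e => (subV u (HTerm.app f as) e.1, e.2))) := by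
            rintro e' he'
            obtain ⟨e, he, rfl⟩ := List.mem_map.mp he'
            show evC w0 (subV u (HTerm.app f as) e.1) = evC w0 e.2
            rw [evC_subV_fix hw0u]
            exact hw0Q e he
          have huP : u ∈ varsP ((HTerm.app f as, HTerm.var u) :: Q) := Or.inr hrPu
          have hsubV : varsP (Q.map (fun e => (subV u (HTerm.app f as) e.1, e.2)))
              ⊆ varsP ((HTerm.app f as, HTerm.var u) :: Q) \ {u} := by
            intro v hv
            have hvu : v ≠ u := by
              intro h; subst h
              rcases hv with h | h
              · omega
              · rw [hcr] at h; omega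
            refine ⟨?_, hvu⟩
            rcases hv with h | h
            · rw [hcln v hvu] at h
              left; rw [leftC_cons']; omega
            · rw [hcr] at h; right; rw [rightC_cons']; omega
          have hlt := ncard_decrease (varsP_finite _) huP hsubV
          obtain ⟨g', hg'1, hg'2⟩ := ih1
            ((varsP (Q.map (fun e => (subV u (HTerm.app f as) e.1, e.2)))).ncard)
            (by omega) (sizeP (Q.map (fun e => (subV u (HTerm.app f as) e.1, e.2))))
            (Q.map (fun e => (subV u (HTerm.app f as) e.1, e.2))) le_rfl le_rfl
            hI1' hI2' ⟨w0, hsol'⟩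
          refine ⟨Function.update g' u (evC g' (HTerm.app f as)), ?_, ?_⟩
          · intro e he
            rcases List.mem_cons.mp he with rfl | he
            · show evC (Function.update g' u (evC g' (HTerm.app f as))) (HTerm.app f as)
                = Function.update g' u (evC g' (HTerm.app f as)) u
              rw [Function.update_self, evC_update_not_mem hua]
            · have hrfree : u ∉ e.2.varsIn := by
                intro hm
                have := cnt_right_le he u
                have := cnt_pos_iff.mpr hm
                omega
              have h2 := hg'1 (subV u (HTerm.app f as) e.1, e.2)
                (List.mem_map.mpr ⟨e, he, rfl⟩)
              show evC (Function.update g' u (evC g' (HTerm.app f as))) e.1 = _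
              rw [← evC_subV, h2, evC_update_not_mem hrfree]
          · intro z hz
            have hzu : z ≠ u := by
              intro h; subst h
              apply hz
              refine ⟨?_, hrPu⟩
              rw [leftC_cons']
              omega
            rw [Function.update_of_ne hzu]
            apply hg'2
            intro hm
            apply hz
            obtain ⟨hm1, hm2⟩ := hm
            rw [hcr] at hm2
            rw [hcln z hzu] at hm1
            constructor
            · rw [leftC_cons']; omega
            · rw [rightC_cons']; omega
        · -- u is pure-right
          have hlQ0 : leftC Q u = 0 := by omega
          have huP : u ∈ varsP ((HTerm.app f as, HTerm.var u) :: Q) := Or.inr hrPu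
          have humem : u ∉ varsP Q := by
            intro h
            rcases h with h | h
            · omega
            · omega
          have hlt : (varsP Q).ncard < (varsP ((HTerm.app f as, HTerm.var u) :: Q)).ncard :=
            ncard_decrease (varsP_finite _) huP
              (fun v hv => ⟨hQsub hv, fun he => humem (he ▸ hv)⟩)
          obtain ⟨g', hg'1, hg'2⟩ := ih1 ((varsP Q).ncard) (by omega) (sizeP Q) Q
            le_rfl le_rfl hI1Q hI2Q ⟨w0, hw0Q⟩
          have hQfree : ∀ e ∈ Q, u ∉ e.1.varsIn ∧ u ∉ e.2.varsIn := by
            intro e he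
            constructor
            · intro hm
              have := cnt_left_le he u
              have := cnt_pos_iff.mpr hm
              omega
            · intro hm
              have := cnt_right_le he u
              have := cnt_pos_iff.mpr hm
              omega
          refine ⟨Function.update g' u (evC g' (HTerm.app f as)), ?_, ?_⟩
          · intro e he
            rcases List.mem_cons.mp he with rfl | he
            · show evC (Function.update g' u (evC g' (HTerm.app f as))) (HTerm.app f as)
                = Function.update g' u (evC g' (HTerm.app f as)) u
              rw [Function.update_self, evC_update_not_mem hua]
            · obtain ⟨h1, h2⟩ := hQfree e he
              rw [evC_update_not_mem h1, evC_update_not_mem h2]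
              exact hg'1 e he
          · intro z hz
            by_cases hzu : z = u
            · subst hzu
              rw [Function.update_self]
              apply finC_evC
              intro v hv
              have hb1 : 1 ≤ cnt v (HTerm.app f as) := cnt_pos_iff.mpr hv
              apply hg'2
              intro hm
              obtain ⟨hm1, hm2⟩ := hm
              have hrv : 1 ≤ rightC ((HTerm.app f as, HTerm.var z) :: Q) v := by
                rw [rightC_cons']; omega
              have := hI2 v hrv
              rw [leftC_cons'] at this
              omega
            · rw [Function.update_of_ne hzu]
              exact hg'2 z (fun hm => hz (hSHsub hm))
    | app f' bs =>
      -- decomposition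
      have hff : f = f' := by
        have h0 : evC w0 (HTerm.app f as) [] = evC w0 (HTerm.app f' bs) [] :=
          congrFun hw0ab []
        have h1 : (some f : Option Sg.Sym) = some f' := h0
        injection h1
      subst hff
      have hcntA : ∀ (v : ℕ) (ts : Fin (Sg.arity f) → HTerm Sg),
          cnt v (HTerm.app f ts) = ∑ i, cnt v (ts i) := fun v ts => rfl
      have htsA : ∀ (ts : Fin (Sg.arity f) → HTerm Sg),
          tsize (HTerm.app f ts) = 1 + ∑ i, tsize (ts i) := fun ts => rfl
      have hleq : ∀ v, leftC (List.ofFn (fun i => (as i, bs i)) ++ Q) v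
          = leftC ((HTerm.app f as, HTerm.app f bs) :: Q) v := by
        intro v
        rw [leftC_append, leftC_ofFn, leftC_cons', hcntA]
      have hreq : ∀ v, rightC (List.ofFn (fun i => (as i, bs i)) ++ Q) v
          = rightC ((HTerm.app f as, HTerm.app f bs) :: Q) v := by
        intro v
        rw [rightC_append, rightC_ofFn, rightC_cons', hcntA]
      have hvars_eq : varsP (List.ofFn (fun i => (as i, bs i)) ++ Q)
          = varsP ((HTerm.app f as, HTerm.app f bs) :: Q) := by
        ext v
        show (_ ∨ _) ↔ (_ ∨ _)
        rw [hleq, hreq]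
      have hSH_eq : SHP (List.ofFn (fun i => (as i, bs i)) ++ Q)
          = SHP ((HTerm.app f as, HTerm.app f bs) :: Q) := by
        ext v
        show (_ ∧ _) ↔ (_ ∧ _)
        rw [hleq, hreq]
      have hsize : sizeP (List.ofFn (fun i => (as i, bs i)) ++ Q) + 2
          = sizeP ((HTerm.app f as, HTerm.app f bs) :: Q) := by
        rw [sizeP_append, sizeP_ofFn, sizeP_cons', htsA, htsA, Finset.sum_add_distrib]
        omega
      have hw0ch : ∀ i : Fin (Sg.arity f), evC w0 (as i) = evC w0 (bs i) := by
        intro i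
        funext q
        have h0 := congrFun hw0ab (i.val :: q)
        have e1 : evC w0 (HTerm.app f as) (i.val :: q)
            = if h : i.val < Sg.arity f then evC w0 (as ⟨i.val, h⟩) q else none := rfl
        have e2 : evC w0 (HTerm.app f bs) (i.val :: q)
            = if h : i.val < Sg.arity f then evC w0 (bs ⟨i.val, h⟩) q else none := rfl
        rw [e1, e2, dif_pos i.isLt, dif_pos i.isLt] at h0
        simpa using h0
      have hsol' : SolvedBy w0 (List.ofFn (fun i => (as i, bs i)) ++ Q) := by
        intro e he
        rcases List.mem_append.mp he with he | he
        · obtain ⟨i, hi⟩ := List.mem_ofFn.mp he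
          rw [← hi]
          exact hw0ch i
        · exact hw0Q e he
      obtain ⟨g, hg1, hg2⟩ := ih2 (sizeP (List.ofFn (fun i => (as i, bs i)) ++ Q))
        (by omega) (List.ofFn (fun i => (as i, bs i)) ++ Q)
        (by rw [hvars_eq]; exact hn1) le_rfl
        (fun v => by rw [hreq]; exact hI1 v)
        (fun v hv => by rw [hleq]; exact hI2 v (by rw [← hreq]; exact hv))
        ⟨w0, hsol'⟩
      refine ⟨g, ?_, ?_⟩
      · intro e he
        rcases List.mem_cons.mp he with rfl | he
        · show evC g (HTerm.app f as) = evC g (HTerm.app f bs)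
          funext p
          cases p with
          | nil => rfl
          | cons i p' =>
            have e1 : evC g (HTerm.app f as) (i :: p')
                = if h : i < Sg.arity f then evC g (as ⟨i, h⟩) p' else none := rfl
            have e2 : evC g (HTerm.app f bs) (i :: p')
                = if h : i < Sg.arity f then evC g (bs ⟨i, h⟩) p' else none := rfl
            rw [e1, e2]
            by_cases hi : i < Sg.arity f
            · rw [dif_pos hi, dif_pos hi]
              have := hg1 (as ⟨i, hi⟩, bs ⟨i, hi⟩)
                (List.mem_append.mpr (Or.inl (List.mem_ofFn.mpr ⟨⟨i, hi⟩, rfl⟩)))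
              exact congrFun this p'
            · rw [dif_neg hi, dif_neg hi]
        · exact hg1 e (List.mem_append.mpr (Or.inr he))
      · intro z hz
        apply hg2
        rw [hSH_eq]
        exact hz
end AMGU
namespace AMGU

open HTerm
open scoped Classical

variable {Sg : Signature}

/-- two occurrences yield two distinct paths. -/
lemma two_paths {v : ℕ} {t : HTerm Sg} (h : 2 ≤ cnt v t) :
    ∃ p q : List ℕ, p ≠ q ∧ t.labelAt p = some (Sum.inr v) ∧
      t.labelAt q = some (Sum.inr v) := by
  induction t with
  | var y =>
    unfold cnt at h
    split at h <;> omega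
  | app f ts ih =>
    unfold cnt at h
    by_cases hex : ∃ i, 2 ≤ cnt v (ts i)
    · obtain ⟨i, hi⟩ := hex
      obtain ⟨p, q, hpq, hp, hq⟩ := ih i hi
      refine ⟨i.val :: p, i.val :: q, ?_, ?_, ?_⟩
      · intro hh; injection hh with h1 h2; exact hpq h2
      · simp [labelAt, i.isLt]; exact hp
      · simp [labelAt, i.isLt]; exact hq
    · push_neg at hex
      have hall : ∀ i, cnt v (ts i) ≤ 1 := fun i => by have := hex i; omega
      have : ∃ i j : Fin (Sg.arity f), i ≠ j ∧ 1 ≤ cnt v (ts i) ∧ 1 ≤ cnt v (ts j) := by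
        by_contra hcc
        push_neg at hcc
        by_cases he : ∃ i, 1 ≤ cnt v (ts i)
        · obtain ⟨i, hi⟩ := he
          have hz : ∀ j, j ≠ i → cnt v (ts j) = 0 := by
            intro j hj
            by_contra hh
            have h1 : 1 ≤ cnt v (ts j) := by omega
            have := hcc i j (fun hij => hj hij.symm) hi
            omega
          have hsum : ∑ j, cnt v (ts j) = cnt v (ts i) := by
            apply Finset.sum_eq_single
            · intro j _ hj; exact hz j hj
            · intro hij; exact absurd (Finset.mem_univ i) hij
          have := hall i
          omega
        · push_neg at he
          have hz : ∀ i, cnt v (ts i) = 0 := fun i => by have := he i; omega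
          have hsum : ∑ j, cnt v (ts j) = 0 := Finset.sum_eq_zero (fun j _ => hz j)
          omega
      obtain ⟨i, j, hij, hi, hj⟩ := this
      obtain ⟨p, hp⟩ := occ_exists (cnt_pos_iff.mp hi)
      obtain ⟨q, hq⟩ := occ_exists (cnt_pos_iff.mp hj)
      refine ⟨i.val :: p, j.val :: q, ?_, ?_, ?_⟩
      · intro hh
        injection hh with h1 h2
        exact hij (Fin.ext h1)
      · simp [labelAt, i.isLt]; exact hp
      · simp [labelAt, j.isLt]; exact hq

lemma cnt_le_one_of_treeLinear {t : HTerm Sg} (h : treeLinear t.labelAt) (v : ℕ) :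
    cnt v t ≤ 1 := by
  by_contra hc
  obtain ⟨p, q, hpq, hp, hq⟩ := two_paths (t := t) (v := v) (by omega)
  exact hpq (h v p q hp hq)

lemma cnt_le_one_of_occLin {t : HTerm Sg} {v : ℕ}
    (h : occursLinearlyIn v t.labelAt) : cnt v t ≤ 1 := by
  by_contra hc
  obtain ⟨p, q, hpq, hp, hq⟩ := two_paths (t := t) (v := v) (by omega)
  obtain ⟨p0, -, hun⟩ := h
  exact hpq ((hun p hp).trans (hun q hq).symm)

lemma leftC_single (a b : HTerm Sg) (v : ℕ) : leftC [(a, b)] v = cnt v a := by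
  simp [leftC]

lemma rightC_single (a b : HTerm Sg) (v : ℕ) : rightC [(a, b)] v = cnt v b := by
  simp [rightC]

/-- THE STAR LEMMA: non-shared variables of the two rational trees are
finiteness-preserved in any most general solution. -/
lemma star (σ : Subst Sg) (hσR : σ.InRSF) (x : ℕ) (t : HTerm Sg)
    (S T : HTerm Sg) (hSd : ∀ z ∈ S.varsIn, z ∉ σ.dom) (hTd : ∀ z ∈ T.varsIn, z ∉ σ.dom)
    (hSx : ∀ w : ℕ → C Sg, (strucC Sg).Sat w σ.eqs → evC w S = w x)
    (hTt : ∀ w : ℕ → C Sg, (strucC Sg).Sat w σ.eqs → evC w T = evC w t)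
    (hlin : treeLinear S.labelAt ∨ treeLinear T.labelAt)
    (hshl : ∀ v ∈ S.varsIn ∩ T.varsIn,
      occursLinearlyIn v S.labelAt ∧ occursLinearlyIn v T.labelAt)
    (τ : Subst Sg) (hτR : τ.InRSF)
    (hτE : RTEquiv τ.eqs (σ.eqs ∪ {(HTerm.var x, t)})) :
    ∀ z ∈ VST S T, z ∉ S.varsIn ∩ T.varsIn → z ∈ τ.hvars := by
  intro z hzV hzns
  -- canonical τ-solution
  set w0 : ℕ → C Sg := canonC hτR (fun _ _ => none) with hw0def
  have hw0τ : (strucC Sg).Sat w0 τ.eqs := canonC_sat hτR _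
  have hw0E : (strucC Sg).Sat w0 (σ.eqs ∪ {(HTerm.var x, t)}) :=
    (hτE (modelC Sg) w0).mp hw0τ
  have hw0σ : (strucC Sg).Sat w0 σ.eqs := fun e he => hw0E e (Or.inl he)
  have hw0xt : evC w0 (HTerm.var x) = evC w0 t := hw0E _ (Or.inr rfl)
  have hsol : evC w0 S = evC w0 T := by
    rw [hSx w0 hw0σ, hTt w0 hw0σ]
    exact hw0xt
  -- obtain the good solution from the system lemma
  have hg : ∃ g : ℕ → C Sg, evC g S = evC g T ∧
      ∀ z', z' ∉ S.varsIn ∩ T.varsIn → finC (g z') := by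
    rcases hlin with hlinS | hlinT
    · -- S linear: system [(T, S)]
      obtain ⟨g, hg1, hg2⟩ := SYS ((varsP [(T, S)]).ncard) (sizeP [(T, S)]) [(T, S)]
        le_rfl le_rfl
        (fun v => by rw [rightC_single]; exact cnt_le_one_of_treeLinear hlinS v)
        (fun v hv => by
          rw [rightC_single] at hv
          rw [leftC_single]
          by_cases hvT : v ∈ T.varsIn
          · exact cnt_le_one_of_occLin (hshl v ⟨cnt_pos_iff.mp hv, hvT⟩).2
          · have := cnt_zero_iff.mpr hvT
            omega)
        ⟨w0, by
          rintro e he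
          rcases List.mem_cons.mp he with rfl | he
          · exact hsol.symm
          · cases he⟩
      refine ⟨g, (hg1 (T, S) (List.mem_cons_self)).symm, ?_⟩
      intro z' hz'
      apply hg2
      intro hm
      obtain ⟨hm1, hm2⟩ := hm
      rw [leftC_single] at hm1
      rw [rightC_single] at hm2
      exact hz' ⟨cnt_pos_iff.mp hm2, cnt_pos_iff.mp hm1⟩
    · -- T linear: system [(S, T)]
      obtain ⟨g, hg1, hg2⟩ := SYS ((varsP [(S, T)]).ncard) (sizeP [(S, T)]) [(S, T)]
        le_rfl le_rfl
        (fun v => by rw [rightC_single]; exact cnt_le_one_of_treeLinear hlinT v)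
        (fun v hv => by
          rw [rightC_single] at hv
          rw [leftC_single]
          by_cases hvS : v ∈ S.varsIn
          · exact cnt_le_one_of_occLin (hshl v ⟨hvS, cnt_pos_iff.mp hv⟩).1
          · have := cnt_zero_iff.mpr hvS
            omega)
        ⟨w0, by
          rintro e he
          rcases List.mem_cons.mp he with rfl | he
          · exact hsol
          · cases he⟩
      refine ⟨g, hg1 (S, T) (List.mem_cons_self), ?_⟩
      intro z' hz'
      apply hg2
      intro hm
      obtain ⟨hm1, hm2⟩ := hm
      rw [leftC_single] at hm1
      rw [rightC_single] at hm2
      exact hz' ⟨cnt_pos_iff.mp hm1, cnt_pos_iff.mp hm2⟩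
  obtain ⟨g, hg1, hg2⟩ := hg
  -- build the E-solution
  set w₁ : ℕ → C Sg := canonC hσR g with hw₁def
  have hw₁σ : (strucC Sg).Sat w₁ σ.eqs := canonC_sat hσR _
  have hw₁ag : ∀ z' ∉ σ.dom, w₁ z' = g z' := fun z' hz' => canonC_agree hσR g hz'
  have hevS : evC w₁ S = evC g S := evC_congr (fun z' hz' => hw₁ag z' (hSd z' hz'))
  have hevT : evC w₁ T = evC g T := evC_congr (fun z' hz' => hw₁ag z' (hTd z' hz'))
  have hw₁xt : evC w₁ (HTerm.var x) = evC w₁ t := by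
    show w₁ x = evC w₁ t
    rw [← hSx w₁ hw₁σ, ← hTt w₁ hw₁σ, hevS, hevT, hg1]
  have hw₁E : (strucC Sg).Sat w₁ (σ.eqs ∪ {(HTerm.var x, t)}) := by
    rintro e (he | he)
    · exact hw₁σ e he
    · have : e = (HTerm.var x, t) := he
      rw [this]
      exact hw₁xt
  have hw₁τ : (strucC Sg).Sat w₁ τ.eqs := (hτE (modelC Sg) w₁).mpr hw₁E
  -- finiteness at z
  have hzd : z ∉ σ.dom := by
    rcases hzV with h | h
    · exact hSd z h
    · exact hTd z h
  have hfin : finC (w₁ z) := by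
    rw [hw₁ag z hzd]
    exact hg2 z hzns
  exact hvars_of_finC hτR hw₁τ hfin

end AMGU
/-- the "share linearly" case of abstract unification. -/
theorem amgu_share_linearly_case
    (Sg : Signature) (hconst : ∃ f, Sg.arity f = 0) (hposar : ∃ f, 0 < Sg.arity f)
    (σ : Subst Sg) (hσ : σ.IsVSubst)
    (x : ℕ) (t : HTerm Sg) (hbind : t ≠ HTerm.var x)
    (hxh : x ∈ σ.hvars) (hth : t.varsIn ⊆ σ.hvars)
    (hlin : treeLinear (σ.rt (HTerm.var x)) ∨ treeLinear (σ.rt t))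
    (hshl : ∀ y ∈ treeVars (σ.rt (HTerm.var x)) ∩ treeVars (σ.rt t),
      occursLinearlyIn y (σ.rt (HTerm.var x)) ∧ occursLinearlyIn y (σ.rt t)) :
    ∀ τ ∈ mgsRT (σ.eqs ∪ {(HTerm.var x, t)}),
      σ.hvars \ {y : ℕ | (treeVars (σ.rt (HTerm.var y))
          ∩ treeVars (σ.rt (HTerm.var x)) ∩ treeVars (σ.rt t)).Nonempty}
        ⊆ τ.hvars := by
  classical
  rintro τ ⟨hτR, hτE, -⟩ y0 ⟨hy0h, hy0ex⟩
  obtain ⟨hσR, -⟩ := hσ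
  -- stabilized representatives
  obtain ⟨nx, hnx⟩ := AMGU.hvars_stab (ρ := σ) (t := HTerm.var x)
    (by intro z hz; have : z = x := hz; subst this; exact hxh)
  obtain ⟨nt, hnt⟩ := AMGU.hvars_stab (ρ := σ) (t := t) hth
  obtain ⟨n0, hn0⟩ := AMGU.hvars_stab (ρ := σ) (t := HTerm.var y0)
    (by intro z hz; have : z = y0 := hz; subst this; exact hy0h)
  set S := σ.iter nx (HTerm.var x) with hS
  set T := σ.iter nt t with hT
  set T0 := σ.iter n0 (HTerm.var y0) with hT0
  have hrtS : σ.rt (HTerm.var x) = S.labelAt := AMGU.rt_eq_labelAt hnx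
  have hrtT : σ.rt t = T.labelAt := AMGU.rt_eq_labelAt hnt
  have hrtT0 : σ.rt (HTerm.var y0) = T0.labelAt := AMGU.rt_eq_labelAt hn0
  -- the canonical τ-solution
  set w₀ : ℕ → AMGU.C Sg := AMGU.canonC hτR (fun _ _ => none) with hw₀
  have hw₀τ : (AMGU.strucC Sg).Sat w₀ τ.eqs := AMGU.canonC_sat hτR _
  have hw₀E : (AMGU.strucC Sg).Sat w₀ (σ.eqs ∪ {(HTerm.var x, t)}) :=
    (hτE (AMGU.modelC Sg) w₀).mp hw₀τ
  have hw₀σ : (AMGU.strucC Sg).Sat w₀ σ.eqs := fun e he => hw₀E e (Or.inl he)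
  have hw₀xt : AMGU.evC w₀ (HTerm.var x) = AMGU.evC w₀ t :=
    hw₀E _ (Or.inr rfl)
  -- w₀ solves S ≐ T
  have hsol : AMGU.evC w₀ S = AMGU.evC w₀ T := by
    rw [hS, hT, AMGU.evC_iter hw₀σ, AMGU.evC_iter hw₀σ]
    exact hw₀xt
  -- the star lemma
  have hstar0 := AMGU.star σ hσR x t S T hnx hnt
    (fun w hw => by rw [hS, AMGU.evC_iter hw]; rfl)
    (fun w hw => by rw [hT, AMGU.evC_iter hw])
    (by rwa [hrtS, hrtT] at hlin)
    (by
      intro v hv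
      have := hshl v (by
        rw [hrtS, hrtT, AMGU.treeVars_labelAt, AMGU.treeVars_labelAt]; exact hv)
      rwa [hrtS, hrtT] at this)
    τ hτR hτE
  have hstar : ∀ z ∈ AMGU.VST S T, z ∉ S.varsIn ∩ T.varsIn → AMGU.finC (w₀ z) := by
    intro z hz1 hz2
    have hzh := hstar0 z hz1 hz2
    exact AMGU.finC_canonC hτR (fun _ => AMGU.finC_none) z hzh
  -- core unification
  obtain ⟨g, hg1, hg2⟩ := AMGU.core_unif S T w₀ hsol hstar
  -- the new solution of E
  set w₁ : ℕ → AMGU.C Sg := AMGU.canonC hσR g with hw₁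
  have hw₁σ : (AMGU.strucC Sg).Sat w₁ σ.eqs := AMGU.canonC_sat hσR _
  have hw₁ag : ∀ z ∉ σ.dom, w₁ z = g z := fun z hz => AMGU.canonC_agree hσR g hz
  have hevS : AMGU.evC w₁ S = AMGU.evC g S :=
    AMGU.evC_congr (fun z hz => hw₁ag z (hnx z hz))
  have hevT : AMGU.evC w₁ T = AMGU.evC g T :=
    AMGU.evC_congr (fun z hz => hw₁ag z (hnt z hz))
  have hw₁xt : AMGU.evC w₁ (HTerm.var x) = AMGU.evC w₁ t := by
    have h1 : AMGU.evC w₁ (HTerm.var x) = AMGU.evC w₁ S := by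
      rw [hS, AMGU.evC_iter hw₁σ]
    have h2 : AMGU.evC w₁ t = AMGU.evC w₁ T := by
      rw [hT, AMGU.evC_iter hw₁σ]
    rw [h1, h2, hevS, hevT, hg1]
  have hw₁E : (AMGU.strucC Sg).Sat w₁ (σ.eqs ∪ {(HTerm.var x, t)}) := by
    rintro e (he | he)
    · exact hw₁σ e he
    · have : e = (HTerm.var x, t) := he
      rw [this]
      exact hw₁xt
  have hw₁τ : (AMGU.strucC Sg).Sat w₁ τ.eqs := (hτE (AMGU.modelC Sg) w₁).mpr hw₁E
  -- w₁ is finite at y0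
  have hfin : AMGU.finC (w₁ y0) := by
    have h2 : w₁ y0 = AMGU.evC w₁ T0 := by
      show AMGU.evC w₁ (HTerm.var y0) = AMGU.evC w₁ T0
      rw [hT0, AMGU.evC_iter hw₁σ]
    have h3 : AMGU.evC w₁ T0 = AMGU.evC g T0 :=
      AMGU.evC_congr (fun z hz => hw₁ag z (hn0 z hz))
    rw [h2, h3]
    apply AMGU.finC_evC
    intro z hz
    apply hg2
    intro hzin
    apply hy0ex
    refine ⟨z, ?_⟩
    rw [hrtS, hrtT, hrtT0, AMGU.treeVars_labelAt, AMGU.treeVars_labelAt,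
      AMGU.treeVars_labelAt]
    exact ⟨⟨hz, hzin.1⟩, hzin.2⟩
  exact AMGU.hvars_of_finC hτR hw₁τ hfin
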